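/- arXiv:2305.02672 — 5 statements merged into one kernel-verified Lean document; each statement's English description precedes it below -/
import Mathlib

section
/- Let φ = (1+√5)/2. For every integer i ≥ 1: L_{2i} = φ^{2i} + φ^{−2i}; and for every integer i ≥ 0: L_{2i+1} = Σ_{k=0}^{i} φ^{2k} + Σ_{k=1}^{i} φ^{−2k}. In each case the set of exponents appearing contains no two consecutive integers, so these identities exhibit the canonical φ-representation of the corresponding Lucas number. -/
/-!
By Binet's formula for Lucas numbers, `L n = φ ^ n + ψ ^ n`, and `ψ = -φ⁻¹`; so for even `n`
the conjugate term is `φ ^ (-n)`, which is the even case. The odd case follows by induction from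
`L (2i+3) = L (2i+2) + L (2i+1)`, the new even Lucas number contributing the two new outermost
exponents `±(2i+2)`.
-/

/-- The golden ratio φ = (1+√5)/2. -/
noncomputable def phi : ℝ := (1 + Real.sqrt 5) / 2

/-- Lucas numbers: defined by L₀ = 2, L₁ = 1, L_{n+2} = L_{n+1} + L_n. -/
def lucas : ℕ → ℕ
  | 0 => 2
  | 1 => 1
  | n + 2 => lucas (n + 1) + lucas n

open Real goldenRatio

lemma phi_eq_goldenRatio : phi = φ := rfl

lemma lucas_add_two (n : ℕ) : lucas (n + 2) = lucas (n + 1) + lucas n := rfl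

theorem coe_lucas_eq (n : ℕ) : (lucas n : ℝ) = φ ^ n + ψ ^ n := by
  induction n using lucas.induct with
  | case1 => norm_num [lucas]
  | case2 => simp [lucas, goldenRatio_add_goldenConj]
  | case3 n ih₁ ih₀ =>
    show (lucas (n + 2) : ℝ) = φ ^ (n + 2) + ψ ^ (n + 2)
    rw [lucas_add_two, Nat.cast_add, ih₁, ih₀]
    linear_combination (-φ ^ n) * goldenRatio_sq - ψ ^ n * goldenConj_sq

lemma goldenRatio_zpow_neg_two_mul (i : ℕ) : φ ^ (-(2 * (i : ℤ))) = ψ ^ (2 * i) := by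
  rw [zpow_neg, ← inv_zpow, inv_goldenRatio,
    show 2 * (i : ℤ) = ((2 * i : ℕ) : ℤ) by push_cast; rfl, zpow_natCast,
    Even.neg_pow (even_two_mul i)]

theorem coe_lucas_two_mul (i : ℕ) :
    (lucas (2 * i) : ℝ) = phi ^ (2 * (i : ℤ)) + phi ^ (-(2 * (i : ℤ))) := by
  rw [phi_eq_goldenRatio, goldenRatio_zpow_neg_two_mul, coe_lucas_eq]
  norm_cast

theorem coe_lucas_two_mul_add_one (i : ℕ) :
    (lucas (2 * i + 1) : ℝ) =
      (∑ k ∈ Finset.range (i + 1), phi ^ (2 * (k : ℤ))) +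
        ∑ k ∈ Finset.Icc 1 i, phi ^ (-(2 * (k : ℤ))) := by
  induction i with
  | zero => simp [lucas]
  | succ i ih =>
    rw [show 2 * (i + 1) + 1 = 2 * i + 1 + 2 by ring, lucas_add_two, Nat.cast_add,
      show 2 * i + 1 + 1 = 2 * (i + 1) by ring, ih, coe_lucas_two_mul,
      Finset.sum_range_succ _ (i + 1), Finset.sum_Icc_succ_top (by omega)]
    push_cast
    ring

theorem lucas_canonical_phi_representation :
    (∀ i : ℕ, 1 ≤ i →
      (lucas (2 * i) : ℝ) = phi ^ (2 * (i : ℤ)) + phi ^ (-(2 * (i : ℤ)))) ∧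
    (∀ i : ℕ,
      (lucas (2 * i + 1) : ℝ) =
        (∑ k ∈ Finset.range (i + 1), phi ^ (2 * (k : ℤ))) +
          ∑ k ∈ Finset.Icc 1 i, phi ^ (-(2 * (k : ℤ)))) :=
  ⟨fun i _ => coe_lucas_two_mul i, coe_lucas_two_mul_add_one⟩
end

section
/- Let m ≥ 1 and let b_1, b_2, …, b_m ∈ {0,1} with b_m = 1. There exists a natural number n whose canonical φ-representation has fractional digits exactly b_1 ⋯ b_m — i.e., there exists n ∈ ℕ with d_{−j}(n) = b_j for 1 ≤ j ≤ m and d_{−j}(n) = 0 for all j > m — if and only if m is even and b_j·b_{j+1} = 0 for all 1 ≤ j < m. -/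
/-- `a` is a finite φ-representation of the real number `x`: a finitely supported
function `a : ℤ → {0,1}` with `x = Σ_{i ∈ ℤ} a(i) · φ^i`. -/
def IsPhiRep (x : ℝ) (a : ℤ →₀ ℕ) : Prop :=
  (∀ i, a i ≤ 1) ∧ x = ∑ i ∈ a.support, (a i : ℝ) * phi ^ i

/-- `a` is the canonical φ-representation of `x`: a finite φ-representation with
no two adjacent digits equal to 1. -/
def IsCanonRep (x : ℝ) (a : ℤ →₀ ℕ) : Prop :=
  IsPhiRep x a ∧ ∀ i : ℤ, a i * a (i + 1) = 0

/-!
Write `ψ = -φ⁻¹` for the conjugate of `φ`. Every integer power `φ ^ i` is `fib i * φ + fib (i - 1)`,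
and likewise for `ψ`; as `φ` is irrational, an integer `n = ∑ i ∈ S, φ ^ i` therefore also equals
`∑ i ∈ S, ψ ^ i`. When `S` has no two consecutive elements, the exponents `i ≥ 0` contribute less
than `φ` in absolute value to this conjugate sum, while among the negative exponents the least one,
`k = -m`, dominates: `φ ^ (-k - 2) < (-1) ^ k * ∑ i ∈ S with i < 0, ψ ^ i`. For odd `k` this gives
`0 < n < φ - φ⁻¹ = 1`.

Conversely, for a sparse set `F` of negative exponents with even least element, Binet's formula and
the same estimate show `t = -∑ i ∈ F, fib i > 0`. Adding to `F` the Zeckendorf representation of `t`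
(exponents `≥ 2`) cancels the `φ`-component, so the `φ`-power sum becomes a natural number, and by
uniqueness of sparse representations (the largest element of a symmetric difference outweighs all
smaller ones) this set is its canonical representation.
-/

open Finset Real
open scoped goldenRatio symmDiff

def IsSparse (S : Finset ℤ) : Prop := ∀ i ∈ S, i + 1 ∉ S

namespace IsSparse

variable {S T : Finset ℤ}

theorem subset (hS : IsSparse S) (hTS : T ⊆ S) : IsSparse T :=
  fun i hi hi' => hS i (hTS hi) (hTS hi')

theorem union (hS : IsSparse S) (hT : IsSparse T) (hST : ∀ i ∈ S, ∀ j ∈ T, i + 1 < j) :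
    IsSparse (S ∪ T) := by
  intro i hi hi'
  rw [mem_union] at hi hi'
  rcases hi with hi | hi <;> rcases hi' with hi' | hi'
  · exact hS i hi hi'
  · exact (hST i hi _ hi').ne rfl
  · exact absurd (hST _ hi' i hi) (by omega)
  · exact hT i hi hi'

theorem neg (hS : IsSparse S) : IsSparse (S.map (Equiv.neg ℤ).toEmbedding) := by
  intro i hi hi'
  simp only [mem_map_equiv, Equiv.neg_symm, Equiv.neg_apply] at hi hi'
  exact hS (-(i + 1)) hi' (by rwa [show -(i + 1) + 1 = -i by ring])

end IsSparse

theorem goldenRatio_zpow_add_one (k : ℤ) : φ ^ (k + 1) = φ ^ k + φ ^ (k - 1) := by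
  nth_rw 2 [show k = k - 1 + 1 by ring]
  rw [show k + 1 = k - 1 + 2 by ring, zpow_add₀ goldenRatio_ne_zero,
    zpow_add_one₀ goldenRatio_ne_zero, zpow_ofNat, goldenRatio_sq]
  ring

theorem sum_goldenRatio_zpow_lt {S : Finset ℤ} (hS : IsSparse S) {M : ℤ} (hM : ∀ i ∈ S, i ≤ M) :
    ∑ i ∈ S, φ ^ i < φ ^ (M + 1) := by
  induction S using Finset.induction_on_max generalizing M with
  | empty => simpa using zpow_pos goldenRatio_pos _
  | insert k S hlt ih =>
    have hk : k ∈ insert k S := mem_insert_self k S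
    have hS' : ∀ i ∈ S, i ≤ k - 2 := fun i hi => by
      have : i ≠ k - 1 := by rintro rfl; exact hS _ (mem_insert_of_mem hi) (by simp)
      have := hlt i hi
      omega
    have hrest : ∑ i ∈ S, φ ^ i < φ ^ (k - 1) := by
      simpa [sub_add] using ih (hS.subset (subset_insert k S)) hS'
    rw [sum_insert (fun h => (hlt k h).false)]
    calc φ ^ k + ∑ i ∈ S, φ ^ i < φ ^ k + φ ^ (k - 1) := by gcongr
      _ = φ ^ (k + 1) := (goldenRatio_zpow_add_one k).symm
      _ ≤ φ ^ (M + 1) := zpow_le_zpow_right₀ one_lt_goldenRatio.le (by linarith [hM k hk])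

theorem sum_goldenRatio_zpow_pos {S : Finset ℤ} (hS : S.Nonempty) : 0 < ∑ i ∈ S, φ ^ i :=
  sum_pos (fun i _ => zpow_pos goldenRatio_pos i) hS

theorem abs_goldenConj_zpow (i : ℤ) : |ψ ^ i| = φ ^ (-i) := by
  rw [abs_zpow, abs_of_neg goldenConj_neg, ← neg_neg ψ, ← inv_goldenRatio, neg_neg, inv_zpow']

theorem abs_sum_goldenConj_zpow_lt {S : Finset ℤ} (hS : IsSparse S) {k : ℤ} (hk : ∀ i ∈ S, k ≤ i) :
    |∑ i ∈ S, ψ ^ i| < φ ^ (1 - k) := by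
  calc |∑ i ∈ S, ψ ^ i| ≤ ∑ i ∈ S, φ ^ (-i) := by
        simpa only [abs_goldenConj_zpow] using abs_sum_le_sum_abs (fun i => ψ ^ i) S
    _ = ∑ i ∈ S.map (Equiv.neg ℤ).toEmbedding, φ ^ i := by simp
    _ < φ ^ (-k + 1) :=
      sum_goldenRatio_zpow_lt hS.neg (by simpa using fun i hi => le_neg_of_le_neg (hk (-i) hi))
    _ = φ ^ (1 - k) := by ring_nf

theorem goldenRatio_zpow_lt_neg_one_zpow_mul_sum_goldenConj {F : Finset ℤ} (hF : IsSparse F)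
    {k : ℤ} (hk : k ∈ F) (hmin : ∀ i ∈ F, k ≤ i) : φ ^ (-k - 2) < (-1) ^ k * ∑ i ∈ F, ψ ^ i := by
  have hlead : (-1) ^ k * ψ ^ k = φ ^ (-k) := by
    rw [← mul_zpow, neg_one_mul, ← inv_goldenRatio, inv_zpow']
  have hrest : |(-1) ^ k * ∑ i ∈ F.erase k, ψ ^ i| < φ ^ (-k - 1) := by
    rw [abs_mul, abs_neg_one_zpow, one_mul, show -k - 1 = 1 - (k + 2) by ring]
    refine abs_sum_goldenConj_zpow_lt (hF.subset (erase_subset k F)) fun i hi => ?_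
    obtain ⟨hik, hiF⟩ := mem_erase.1 hi
    have : i ≠ k + 1 := by rintro rfl; exact hF k hk hiF
    have := hmin i hiF
    omega
  have hfib := goldenRatio_zpow_add_one (-k - 1)
  rw [sub_add_cancel, show -k - 1 - 1 = -k - 2 by ring] at hfib
  rw [← add_sum_erase F _ hk, mul_add, hlead]
  linarith [neg_abs_le ((-1) ^ k * ∑ i ∈ F.erase k, ψ ^ i)]

theorem sum_sdiff_goldenRatio_zpow_lt {S T : Finset ℤ} (hT : IsSparse T) {k : ℤ} (hkS : k ∈ S)
    (hkT : k ∉ T) (hmax : ∀ i ∈ S ∆ T, i ≤ k) :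
    ∑ i ∈ T \ S, φ ^ i < ∑ i ∈ S \ T, φ ^ i := by
  have hlt : ∀ i ∈ T \ S, i ≤ k - 1 := fun i hi => by
    have := hmax i (mem_symmDiff.2 (Or.inr (mem_sdiff.1 hi)))
    have : i ≠ k := by rintro rfl; exact (mem_sdiff.1 hi).2 hkS
    omega
  calc ∑ i ∈ T \ S, φ ^ i < φ ^ (k - 1 + 1) := sum_goldenRatio_zpow_lt (hT.subset sdiff_subset) hlt
    _ = φ ^ k := by rw [sub_add_cancel]
    _ ≤ ∑ i ∈ S \ T, φ ^ i :=
      single_le_sum (fun i _ => (zpow_pos goldenRatio_pos i).le) (mem_sdiff.2 ⟨hkS, hkT⟩)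

theorem IsSparse.eq_of_sum_goldenRatio_zpow_eq {S T : Finset ℤ} (hS : IsSparse S) (hT : IsSparse T)
    (h : ∑ i ∈ S, φ ^ i = ∑ i ∈ T, φ ^ i) : S = T := by
  by_contra hne
  have hdiff : ∑ i ∈ S \ T, φ ^ i = ∑ i ∈ T \ S, φ ^ i := by
    linarith [sum_sdiff_sub_sum_sdiff (s₁ := S) (s₂ := T) (f := fun i => φ ^ i)]
  obtain ⟨k, hk, hmax⟩ := (S ∆ T).exists_max_image id (symmDiff_nonempty.2 hne)
  rcases mem_symmDiff.1 hk with ⟨hkS, hkT⟩ | ⟨hkT, hkS⟩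
  · exact (sum_sdiff_goldenRatio_zpow_lt hT hkS hkT hmax).ne' hdiff
  · exact (sum_sdiff_goldenRatio_zpow_lt hS hkT hkS (symmDiff_comm S T ▸ hmax)).ne hdiff

theorem Int.fib_add_one_eq_add (j : ℤ) : Int.fib (j + 1) = Int.fib j + Int.fib (j - 1) := by
  rw [show j + 1 = j - 1 + 2 by ring, Int.fib_add_two, sub_add_cancel, add_comm]

theorem zpow_eq_intFib_mul_add {K : Type*} [Field K] {x : K} (hx : x ^ 2 = x + 1) (i : ℤ) :
    x ^ i = Int.fib i * x + Int.fib (i - 1) := by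
  have hx0 : x ≠ 0 := by rintro rfl; norm_num at hx
  have hinv : x⁻¹ = x - 1 := inv_eq_of_mul_eq_one_right (by linear_combination hx)
  induction i using Int.induction_on with
  | zero => simp
  | succ i ih =>
    rw [zpow_add_one₀ hx0, ih, add_sub_cancel_right, Int.fib_add_one_eq_add]
    push_cast
    linear_combination (Int.fib i : K) * hx
  | pred i ih =>
    have hrec := Int.fib_add_one_eq_add (-(i : ℤ) - 1)
    rw [sub_add_cancel] at hrec
    rw [zpow_sub_one₀ hx0, ih, hinv, hrec]
    push_cast
    linear_combination (Int.fib (-(i : ℤ) - 1) + Int.fib (-(i : ℤ) - 1 - 1) : K) * hx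

theorem sum_zpow_eq_intFib_mul_add {K : Type*} [Field K] {x : K} (hx : x ^ 2 = x + 1)
    (S : Finset ℤ) :
    ∑ i ∈ S, x ^ i = (∑ i ∈ S, Int.fib i : ℤ) * x + (∑ i ∈ S, Int.fib (i - 1) : ℤ) := by
  simp only [zpow_eq_intFib_mul_add hx, sum_add_distrib, sum_mul, Int.cast_sum]

theorem sum_goldenConj_zpow_eq_of_sum_goldenRatio_zpow_eq {S : Finset ℤ} {z : ℤ}
    (h : ∑ i ∈ S, φ ^ i = z) : ∑ i ∈ S, ψ ^ i = z := by
  rw [sum_zpow_eq_intFib_mul_add goldenRatio_sq] at h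
  rw [sum_zpow_eq_intFib_mul_add goldenConj_sq]
  set P : ℤ := ∑ i ∈ S, Int.fib i
  set Q : ℤ := ∑ i ∈ S, Int.fib (i - 1)
  have hP : P = 0 := by
    by_contra hP
    refine (goldenRatio_irrational.intCast_mul hP).ne_int (z - Q) ?_
    push_cast
    linarith
  rw [hP] at h ⊢
  simpa using h

theorem exists_isSparse_sum_intFib_eq (t : ℕ) :
    ∃ Z : Finset ℤ, IsSparse Z ∧ (∀ i ∈ Z, 2 ≤ i) ∧ ∑ i ∈ Z, Int.fib i = t := by
  let R : ℕ → ℕ → Prop := fun a b => b + 2 ≤ a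
  have : Trans R R R := ⟨fun h₁ h₂ => by simp only [R] at *; omega⟩
  have hpw := List.isChain_iff_pairwise.1 (Nat.isZeckendorfRep_zeckendorf t)
  rw [List.pairwise_append] at hpw
  obtain ⟨hpw, -, hge⟩ := hpw
  simp only [List.mem_singleton, forall_eq, zero_add] at hge
  have hnodup : t.zeckendorf.Nodup := hpw.imp fun h => by omega
  refine ⟨t.zeckendorf.toFinset.map Nat.castEmbedding, ?_, ?_, ?_⟩
  · intro i hi hi'
    simp only [mem_map, List.mem_toFinset, Nat.castEmbedding_apply] at hi hi'
    obtain ⟨a, ha, rfl⟩ := hi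
    obtain ⟨c, hc, hca⟩ := hi'
    let R' : ℕ → ℕ → Prop := fun a b => a + 1 ≠ b ∧ b + 1 ≠ a
    have : Std.Symm R' := ⟨fun _ _ h => h.symm⟩
    have := (hpw.imp (R := R) (S := R') fun h => by simp only [R, R'] at *; omega).forall ha hc
    simp only [R'] at this
    omega
  · simp only [mem_map, List.mem_toFinset, Nat.castEmbedding_apply, forall_exists_index, and_imp]
    rintro _ a ha rfl
    exact_mod_cast hge a ha
  · rw [sum_map]
    simp only [Nat.castEmbedding_apply, Int.fib_natCast]
    exact_mod_cast (List.sum_toFinset _ hnodup).trans (Nat.sum_zeckendorf_fib t)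

theorem IsSparse.even_of_sum_goldenRatio_zpow_eq_natCast {S : Finset ℤ} (hS : IsSparse S) {n : ℕ}
    (hn : ∑ i ∈ S, φ ^ i = n) {k : ℤ} (hk : k ∈ S) (hk0 : k < 0) (hmin : ∀ i ∈ S, k ≤ i) :
    Even k := by
  by_contra hodd
  have hconj := sum_goldenConj_zpow_eq_of_sum_goldenRatio_zpow_eq (z := n) (by exact_mod_cast hn)
  rw [← sum_filter_add_sum_filter_not S (· < 0), Int.cast_natCast] at hconj
  have hfrac := goldenRatio_zpow_lt_neg_one_zpow_mul_sum_goldenConj (F := S.filter (· < 0))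
    (hS.subset (filter_subset _ S)) (mem_filter.2 ⟨hk, hk0⟩) fun i hi => hmin i (mem_filter.1 hi).1
  rw [(Int.not_even_iff_odd.1 hodd).neg_one_zpow] at hfrac
  have hint := abs_sum_goldenConj_zpow_lt (S := S.filter (¬ · < 0)) (hS.subset (filter_subset _ S))
    (k := 0) fun i hi => by simpa using (mem_filter.1 hi).2
  rw [sub_zero, zpow_one] at hint
  have hmono : φ ^ (-1 : ℤ) ≤ φ ^ (-k - 2) := zpow_le_zpow_right₀ one_lt_goldenRatio.le (by omega)
  rw [zpow_neg_one, inv_goldenRatio] at hmono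
  have hlt : (n : ℝ) < 1 := by
    rw [← hconj]
    linarith [(abs_lt.1 hint).2, goldenRatio_add_goldenConj]
  have hpos : (0 : ℝ) < n := hn ▸ sum_goldenRatio_zpow_pos ⟨k, hk⟩
  have : n < 1 := by exact_mod_cast hlt
  have : 0 < n := by exact_mod_cast hpos
  omega

theorem IsSparse.sum_intFib_neg {F : Finset ℤ} (hF : IsSparse F) (hneg : ∀ i ∈ F, i < 0) {k : ℤ}
    (hk : k ∈ F) (hmin : ∀ i ∈ F, k ≤ i) (heven : Even k) : ∑ i ∈ F, Int.fib i < 0 := by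
  have hbinet : (∑ i ∈ F, Int.fib i : ℤ) * √5 = ∑ i ∈ F, φ ^ i - ∑ i ∈ F, ψ ^ i := by
    rw [← sum_sub_distrib, Int.cast_sum, sum_mul]
    refine sum_congr rfl fun i _ => ?_
    rw [coe_intFib_eq, div_mul_cancel₀ _ (by positivity)]
  have hF1 : ∑ i ∈ F, φ ^ i < 1 := by
    simpa using sum_goldenRatio_zpow_lt hF (M := -1) fun i hi => by linarith [hneg i hi]
  have hψ := goldenRatio_zpow_lt_neg_one_zpow_mul_sum_goldenConj hF hk hmin
  rw [heven.neg_one_zpow, one_mul] at hψ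
  have hk2 : k ≤ -2 := by obtain ⟨r, hr⟩ := heven; have := hneg k hk; omega
  have h1 : 1 ≤ φ ^ (-k - 2) := one_le_zpow₀ one_lt_goldenRatio.le (by omega)
  have hsum : ((∑ i ∈ F, Int.fib i : ℤ) : ℝ) < 0 :=
    neg_of_mul_neg_left (by linarith) (Real.sqrt_nonneg 5)
  exact_mod_cast hsum

theorem IsSparse.exists_sum_goldenRatio_zpow_eq_natCast {F : Finset ℤ} (hF : IsSparse F)
    (hneg : ∀ i ∈ F, i < 0) {k : ℤ} (hk : k ∈ F) (hmin : ∀ i ∈ F, k ≤ i) (heven : Even k) :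
    ∃ T : Finset ℤ, IsSparse T ∧ T.filter (· < 0) = F ∧ ∃ n : ℕ, ∑ i ∈ T, φ ^ i = n := by
  set t : ℤ := -∑ i ∈ F, Int.fib i
  have ht : 0 ≤ t := by linarith [hF.sum_intFib_neg hneg hk hmin heven]
  obtain ⟨Z, hZ, hZ2, hZsum⟩ := exists_isSparse_sum_intFib_eq t.toNat
  have hsep : ∀ i ∈ F, ∀ j ∈ Z, i + 1 < j := fun i hi j hj => by linarith [hneg i hi, hZ2 j hj]
  refine ⟨F ∪ Z, hF.union hZ hsep, ?_, ?_⟩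
  · rw [filter_union, filter_true_of_mem hneg,
      filter_false_of_mem fun j hj => by have := hZ2 j hj; omega, union_empty]
  have hdisj : Disjoint F Z := disjoint_left.2 fun i hi hiZ => by have := hsep i hi i hiZ; omega
  have hfib : ∑ i ∈ F ∪ Z, Int.fib i = 0 := by
    rw [sum_union hdisj, hZsum, Int.toNat_of_nonneg ht]
    ring
  have hval := sum_zpow_eq_intFib_mul_add goldenRatio_sq (F ∪ Z)
  rw [hfib, Int.cast_zero, zero_mul, zero_add] at hval
  have hq : 0 ≤ ∑ i ∈ F ∪ Z, Int.fib (i - 1) := by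
    have := sum_goldenRatio_zpow_pos ⟨k, mem_union_left Z hk⟩
    rw [hval] at this
    exact_mod_cast this.le
  refine ⟨(∑ i ∈ F ∪ Z, Int.fib (i - 1)).toNat, ?_⟩
  rw [hval]
  exact_mod_cast (Int.toNat_of_nonneg hq).symm

namespace IsPhiRep

variable {x : ℝ} {a : ℤ →₀ ℕ}

theorem apply_eq_one_iff (h : IsPhiRep x a) {i : ℤ} : a i = 1 ↔ i ∈ a.support := by
  rw [Finsupp.mem_support_iff]
  have := h.1 i
  omega

theorem eq_sum_support (h : IsPhiRep x a) : x = ∑ i ∈ a.support, φ ^ i :=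
  h.2.trans <| sum_congr rfl fun i hi => by rw [h.apply_eq_one_iff.2 hi, Nat.cast_one, one_mul]; rfl

end IsPhiRep

theorem IsCanonRep.isSparse_support {x : ℝ} {a : ℤ →₀ ℕ} (h : IsCanonRep x a) :
    IsSparse a.support :=
  fun i hi hi' => by
    rw [Finsupp.mem_support_iff] at hi hi'
    exact mul_ne_zero hi hi' (h.2 i)

def fracSupport (m : ℕ) (b : ℕ → ℕ) : Finset ℤ :=
  ((Icc 1 m).filter (b · = 1)).image fun j : ℕ => -(j : ℤ)

section fracSupport

variable {m : ℕ} {b : ℕ → ℕ}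

theorem mem_fracSupport {i : ℤ} :
    i ∈ fracSupport m b ↔ ∃ j : ℕ, (1 ≤ j ∧ j ≤ m ∧ b j = 1) ∧ -(j : ℤ) = i := by
  simp [fracSupport, and_assoc]

theorem neg_natCast_mem_fracSupport {j : ℕ} :
    -(j : ℤ) ∈ fracSupport m b ↔ 1 ≤ j ∧ j ≤ m ∧ b j = 1 := by
  simp [mem_fracSupport]

theorem neg_le_of_mem_fracSupport {i : ℤ} (hi : i ∈ fracSupport m b) : -(m : ℤ) ≤ i ∧ i < 0 := by
  obtain ⟨j, ⟨hj1, hjm, -⟩, rfl⟩ := mem_fracSupport.1 hi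
  omega

theorem isSparse_fracSupport_iff (hb : ∀ j, b j ≤ 1) :
    IsSparse (fracSupport m b) ↔ ∀ j, 1 ≤ j → j < m → b j * b (j + 1) = 0 := by
  constructor
  · intro hF j hj1 hjm
    have := hb j
    have := hb (j + 1)
    by_contra hne
    obtain ⟨hj, hj'⟩ := Nat.mul_ne_zero_iff.1 hne
    refine hF (-((j + 1 : ℕ) : ℤ)) (neg_natCast_mem_fracSupport.2 ⟨by omega, hjm, by omega⟩) ?_
    rw [show -((j + 1 : ℕ) : ℤ) + 1 = -(j : ℤ) by push_cast; ring]
    exact neg_natCast_mem_fracSupport.2 ⟨hj1, hjm.le, by omega⟩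
  · intro hadj i hi hi'
    obtain ⟨j, ⟨hj1, hjm, hbj⟩, rfl⟩ := mem_fracSupport.1 hi
    obtain ⟨j', ⟨hj'1, -, hbj'⟩, hj'⟩ := mem_fracSupport.1 hi'
    obtain rfl : j = j' + 1 := by omega
    simpa [hbj, hbj'] using hadj j' hj'1 (by omega)

end fracSupport

theorem IsPhiRep.fracDigits_iff {x : ℝ} {a : ℤ →₀ ℕ} (h : IsPhiRep x a) {m : ℕ} {b : ℕ → ℕ}
    (hb : ∀ j, b j ≤ 1) :
    ((∀ j : ℕ, 1 ≤ j → j ≤ m → a (-(j : ℤ)) = b j) ∧ ∀ j : ℕ, m < j → a (-(j : ℤ)) = 0) ↔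
      a.support.filter (· < 0) = fracSupport m b := by
  have hdigit : ∀ j : ℕ, 1 ≤ j → (-(j : ℤ) ∈ a.support.filter (· < 0) ↔ a (-(j : ℤ)) = 1) :=
    fun j hj => by rw [mem_filter, ← h.apply_eq_one_iff]; omega
  constructor
  · rintro ⟨hle, hgt⟩
    ext i
    constructor
    · intro hi
      obtain ⟨j, rfl⟩ := Int.exists_eq_neg_ofNat (mem_filter.1 hi).2.le
      have hj1 : 1 ≤ j := by have := (mem_filter.1 hi).2; omega
      rw [hdigit j hj1] at hi
      rw [neg_natCast_mem_fracSupport]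
      by_cases hjm : j ≤ m
      · exact ⟨hj1, hjm, (hle j hj1 hjm).symm.trans hi⟩
      · exact absurd (hgt j (by omega)) (by omega)
    · intro hi
      obtain ⟨j, ⟨hj1, hjm, hbj⟩, rfl⟩ := mem_fracSupport.1 hi
      rw [hdigit j hj1, hle j hj1 hjm, hbj]
  · intro hF
    have hdigit' : ∀ j : ℕ, 1 ≤ j → (a (-(j : ℤ)) = 1 ↔ j ≤ m ∧ b j = 1) := fun j hj => by
      rw [← hdigit j hj, hF, neg_natCast_mem_fracSupport]
      omega
    refine ⟨fun j hj1 hjm => ?_, fun j hjm => ?_⟩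
    · have := hdigit' j hj1
      have := h.1 (-(j : ℤ))
      have := hb j
      omega
    · have := hdigit' j (by omega)
      have := h.1 (-(j : ℤ))
      omega

/-- A binary word `b₁ ⋯ b_m` (with `b_m = 1`) occurs as the fractional digits of the
canonical φ-representation of some natural number iff `m` is even and the word
contains no two adjacent 1's. Here `d n` denotes the canonical φ-representation of `n`. -/
theorem fractional_part_characterization
    (d : ℕ → ℤ →₀ ℕ) (hd : ∀ n : ℕ, IsCanonRep n (d n))
    (m : ℕ) (hm : 1 ≤ m) (b : ℕ → ℕ) (hb : ∀ j, b j ≤ 1) (hbm : b m = 1) :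
    (∃ n : ℕ, (∀ j : ℕ, 1 ≤ j → j ≤ m → d n (-(j : ℤ)) = b j) ∧
        ∀ j : ℕ, m < j → d n (-(j : ℤ)) = 0) ↔
      (Even m ∧ ∀ j : ℕ, 1 ≤ j → j < m → b j * b (j + 1) = 0) := by
  rw [exists_congr fun n => (hd n).1.fracDigits_iff hb, ← isSparse_fracSupport_iff hb,
    ← Int.even_coe_nat, ← even_neg]
  have hmF : -(m : ℤ) ∈ fracSupport m b := neg_natCast_mem_fracSupport.2 ⟨hm, le_rfl, hbm⟩
  have hmin : ∀ i ∈ fracSupport m b, -(m : ℤ) ≤ i := fun i hi => (neg_le_of_mem_fracSupport hi).1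
  constructor
  · rintro ⟨n, hn⟩
    have hS := (hd n).isSparse_support
    refine ⟨hS.even_of_sum_goldenRatio_zpow_eq_natCast (hd n).1.eq_sum_support.symm
      (mem_filter.1 (hn ▸ hmF)).1 (by omega) fun i hi => ?_, hn ▸ hS.subset (filter_subset _ _)⟩
    by_cases hi0 : i < 0
    · exact hmin i (hn ▸ mem_filter.2 ⟨hi, hi0⟩)
    · omega
  · rintro ⟨heven, hF⟩
    obtain ⟨T, hT, hTF, n, hn⟩ := hF.exists_sum_goldenRatio_zpow_eq_natCast
      (fun i hi => (neg_le_of_mem_fracSupport hi).2) hmF hmin heven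
    refine ⟨n, ?_⟩
    rw [(hd n).isSparse_support.eq_of_sum_goldenRatio_zpow_eq hT
      ((hd n).1.eq_sum_support.symm.trans hn.symm), hTF]
end

section
/- For every natural number n, if b : ℕ → {0,1} is finitely supported with b(i)·b(i+1) = 0 for all i and n = Σ_{i≥0} b(i)·F_{i+2} (the Zeckendorf representation of n), then Σ_{i≥0} b(i) ≤ Σ_{i∈ℤ} d_i(n). In words: the digit sum of the Zeckendorf representation of n is at most the digit sum of the canonical base-φ representation of n. -/
/-!
Write `n = ∑_{i ∈ E} φ ^ i` with `E` a set of pairwise non-adjacent exponents. Conjugation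
`φ ↦ ψ = -φ⁻¹` fixes `n`, so also `n = ∑_{i ∈ E} (-1) ^ i φ ^ (-i)`; comparing the sizes of the
two expansions shows that the lowest exponent `μ` of `E` is even and the highest is `M = -μ` or
`M = -μ - 1`. In the first case `φ ^ M + φ ^ (-M)` is the Lucas number `F (M + 1) + F (M - 1)`,
in the second `φ ^ M + φ ^ (-M - 1) = F (M + 1) + F (M - 1) + φ ^ (-(M - 1))`. Removing these two
digits from `E` subtracts two Fibonacci numbers from `n`, and adding a Fibonacci number lengthens
a Zeckendorf representation by at most one digit, so induction on `E` applies. The leftover `φ ^ (-(M - 1))` is carried by a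
second, simultaneous induction on sets representing `m - φ ^ (-(p + 2))`, which needs one digit
of slack when `m < F (p + 1)`.
-/

namespace Gerdemann

section Zeckendorf

open Nat

def zeckLen (n : ℕ) : ℕ := (zeckendorf n).length

@[simp] lemma zeckLen_zero : zeckLen 0 = 0 := by simp [zeckLen]

lemma zeckLen_fib_add {t r : ℕ} (hr : r < fib (t + 1)) :
    zeckLen (fib (t + 2) + r) = zeckLen r + 1 := by
  have hfib : fib (t + 3) = fib (t + 1) + fib (t + 2) := fib_add_two
  have hgreatest : greatestFib (fib (t + 2) + r) = t + 2 :=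
    le_antisymm (Nat.lt_succ_iff.1 (greatestFib_lt.2 (show _ < fib (t + 3) by omega)))
      (le_greatestFib.2 (by omega))
  rw [zeckLen, zeckendorf_of_pos (by have := fib_pos.2 (show 0 < t + 2 by omega); omega),
    hgreatest, Nat.add_sub_cancel_left, List.length_cons, zeckLen]

lemma exists_eq_fib_add_of_pos {x : ℕ} (hx : 0 < x) :
    ∃ t r, x = fib (t + 2) + r ∧ r < fib (t + 1) := by
  obtain ⟨t, ht⟩ : ∃ t, greatestFib x = t + 2 :=
    ⟨_, (Nat.sub_add_cancel
      (le_greatestFib.2 (by simpa [Nat.one_le_iff_ne_zero] using hx.ne'))).symm⟩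
  have hle : fib (t + 2) ≤ x := ht ▸ fib_greatestFib_le x
  have hlt : x < fib (t + 3) := by simpa [ht] using lt_fib_greatestFib_add_one x
  have hfib : fib (t + 3) = fib (t + 1) + fib (t + 2) := fib_add_two
  exact ⟨t, x - fib (t + 2), by omega, by omega⟩

lemma zeckLen_fib_add_add_fib_le {t r k : ℕ} (hr : r < fib (t + 1)) (hk : k + 2 ≤ t)
    (h : zeckLen (r + fib (k + 2)) ≤ zeckLen r + 1) :
    zeckLen (fib (t + 2) + r + fib (k + 2)) ≤ zeckLen r + 2 := by
  have hfk : fib (k + 2) ≤ fib t := fib_mono hk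
  have f2 : fib (t + 2) = fib t + fib (t + 1) := fib_add_two
  have f3 : fib (t + 3) = fib (t + 1) + fib (t + 2) := fib_add_two
  by_cases hcarry : r + fib (k + 2) < fib (t + 1)
  · rw [add_assoc, zeckLen_fib_add hcarry]
    omega
  obtain ⟨s, hs⟩ : ∃ s, r + fib (k + 2) = fib (t + 1) + s :=
    ⟨_, (Nat.add_sub_of_le (not_lt.1 hcarry)).symm⟩
  have hst : s < fib t := by omega
  obtain ⟨u, rfl⟩ : ∃ u, t = u + 1 := ⟨t - 1, by omega⟩
  rw [hs, zeckLen_fib_add hst] at h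
  rw [show fib (u + 1 + 2) + r + fib (k + 2) = fib (u + 1 + 3) + s by omega,
    zeckLen_fib_add (lt_of_lt_of_le hst (fib_mono (by omega)))]
  omega

lemma zeckLen_add_fib_le (x k : ℕ) : zeckLen (x + fib k) ≤ zeckLen x + 1 := by
  induction x using Nat.strong_induction_on generalizing k with
  | _ x ih =>
  suffices h : ∀ k, zeckLen (x + fib (k + 2)) ≤ zeckLen x + 1 by
    rcases k with _ | _ | k
    · simp
    · exact h 0
    · exact h k
  intro k
  rcases Nat.eq_zero_or_pos x with rfl | hx
  · simpa using (zeckLen_fib_add (t := k) (r := 0) (fib_pos.2 (by omega))).le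
  obtain ⟨t, r, rfl, hr⟩ := exists_eq_fib_add_of_pos hx
  have hrx : r < fib (t + 2) + r := by have := fib_pos.2 (show 0 < t + 2 by omega); omega
  rw [zeckLen_fib_add hr]
  have f2 : fib (t + 2) = fib t + fib (t + 1) := fib_add_two
  have f3 : fib (t + 3) = fib (t + 1) + fib (t + 2) := fib_add_two
  have f4 : fib (t + 4) = fib (t + 2) + fib (t + 3) := fib_add_two
  obtain hk | hk | rfl | hk | hk :
      k + 2 ≤ t ∨ k + 1 = t ∨ k = t ∨ k = t + 1 ∨ t + 2 ≤ k := by omega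
  · exact zeckLen_fib_add_add_fib_le hr hk (ih r hrx (k + 2))
  · have e : fib (k + 2) = fib (t + 1) := by rw [← hk]
    rw [show fib (t + 2) + r + fib (k + 2) = fib (t + 3) + r by omega,
      zeckLen_fib_add (lt_of_lt_of_le hr (fib_mono (by omega)))]
    omega
  · -- doubling: `2 fib (k + 2) = fib (k + 3) + fib k`
    rw [show fib (k + 2) + r + fib (k + 2) = fib (k + 3) + (r + fib k) by omega,
      zeckLen_fib_add (show r + fib k < fib (k + 2) by omega)]
    have := ih r hrx k
    omega
  · have e : fib (k + 2) = fib (t + 3) := by rw [hk]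
    rw [show fib (t + 2) + r + fib (k + 2) = fib (t + 4) + r by omega,
      zeckLen_fib_add (lt_of_lt_of_le hr (fib_mono (by omega)))]
    omega
  · have hx : fib (t + 2) + r < fib (k + 1) :=
      lt_of_lt_of_le (show _ < fib (t + 3) by omega) (fib_mono (by omega))
    rw [add_comm, zeckLen_fib_add hx, zeckLen_fib_add hr]

lemma zeckLen_sum_fib {S : Finset ℕ} (hS : ∀ i ∈ S, i + 1 ∉ S) :
    zeckLen (∑ i ∈ S, fib (i + 2)) = S.card := by
  set l := (S.sort (· ≥ ·)).map (· + 2)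
  have hsum : (l.map fib).sum = ∑ i ∈ S, fib (i + 2) := by
    rw [List.map_map, Finset.sum_eq_multiset_sum, ← Finset.sort_eq S (· ≥ ·), Multiset.map_coe,
      Multiset.sum_coe]
    rfl
  have hrep : l.IsZeckendorfRep := by
    refine List.Pairwise.isChain (List.pairwise_append.2 ⟨?_, List.pairwise_singleton _ _, ?_⟩)
    · refine List.pairwise_map.2 ((S.sortedGT_sort.pairwise).imp_of_mem
        fun {a b} ha hb hab => ?_)
      have hb1 := hS b ((Finset.mem_sort _).1 hb)
      have : a ≠ b + 1 := fun h => hb1 (h ▸ (Finset.mem_sort _).1 ha)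
      omega
    · simp [l]
  rw [← hsum, zeckLen, zeckendorf_sum_fib hrep, List.length_map, Finset.length_sort]

lemma zeckLen_fib_le_one (k : ℕ) : zeckLen (fib k) ≤ 1 := by
  simpa using zeckLen_add_fib_le 0 k

lemma zeckLen_add_fib_add_fib_le (x a b : ℕ) :
    zeckLen (x + fib a + fib b) ≤ zeckLen x + 2 := by
  have := zeckLen_add_fib_le (x + fib a) b
  have := zeckLen_add_fib_le x a
  omega

/-- The leading Zeckendorf digit of `m` merges with `fib (u + 4) + fib (u + 2)` into
`fib (u + 5)`. -/
lemma zeckLen_add_fib_add_fib_le_add_one {u m : ℕ} (h₁ : fib (u + 1) ≤ m)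
    (h₂ : m < fib (u + 4)) :
    zeckLen (m + fib (u + 4) + fib (u + 2)) ≤ zeckLen m + 1 := by
  obtain ⟨t, r, rfl, hr⟩ := exists_eq_fib_add_of_pos (lt_of_lt_of_le (fib_pos.2 (by omega)) h₁)
  have hut : u ≤ t + 1 := by
    by_contra h
    have := fib_mono (show t + 3 ≤ u + 1 by omega)
    have : fib (t + 3) = fib (t + 1) + fib (t + 2) := fib_add_two
    omega
  have htu : t ≤ u + 1 := by
    by_contra h
    have := fib_mono (show u + 4 ≤ t + 2 by omega)
    omega
  rw [zeckLen_fib_add hr]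
  have f2 : fib (u + 2) = fib u + fib (u + 1) := fib_add_two
  have f3 : fib (u + 3) = fib (u + 1) + fib (u + 2) := fib_add_two
  have f4 : fib (u + 4) = fib (u + 2) + fib (u + 3) := fib_add_two
  have f5 : fib (u + 5) = fib (u + 3) + fib (u + 4) := fib_add_two
  obtain h | rfl | rfl : t + 1 = u ∨ t = u ∨ t = u + 1 := by omega
  · have e : fib (t + 2) = fib (u + 1) := by rw [← h]
    have := zeckLen_add_fib_le r (u + 5)
    rw [show fib (t + 2) + r + fib (u + 4) + fib (u + 2) = r + fib (u + 5) by omega]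
    omega
  · have := zeckLen_add_fib_add_fib_le r (t + 5) t
    rw [show fib (t + 2) + r + fib (t + 4) + fib (t + 2) = r + fib (t + 5) + fib t by omega]
    omega
  · have := zeckLen_add_fib_add_fib_le r (u + 5) (u + 2)
    have e : fib (u + 1 + 2) = fib (u + 3) := rfl
    rw [show fib (u + 1 + 2) + r + fib (u + 4) + fib (u + 2) = r + fib (u + 5) + fib (u + 2) by
      omega]
    omega

end Zeckendorf

open Real goldenRatio

lemma goldenRatio_zpow_lt_zpow {a b : ℤ} : φ ^ a < φ ^ b ↔ a < b :=
  zpow_lt_zpow_iff_right₀ one_lt_goldenRatio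

lemma goldenRatio_zpow_le_zpow {a b : ℤ} : φ ^ a ≤ φ ^ b ↔ a ≤ b :=
  zpow_le_zpow_iff_right₀ one_lt_goldenRatio

lemma goldenRatio_zpow_add_two (k : ℤ) : φ ^ (k + 2) = φ ^ (k + 1) + φ ^ k := by
  rw [zpow_add₀ goldenRatio_ne_zero, zpow_add_one₀ goldenRatio_ne_zero]
  norm_cast
  rw [goldenRatio_sq]
  ring

lemma goldenConj_zpow_of_even {i : ℤ} (hi : Even i) : ψ ^ i = φ ^ (-i) := by
  rw [← neg_neg ψ, ← inv_goldenRatio, hi.neg_zpow, inv_zpow, zpow_neg]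

lemma goldenConj_zpow_of_odd {i : ℤ} (hi : Odd i) : ψ ^ i = -φ ^ (-i) := by
  rw [← neg_neg ψ, ← inv_goldenRatio, hi.neg_zpow, inv_zpow, zpow_neg]

lemma goldenRatio_zpow_eq (n : ℤ) : φ ^ n = Int.fib n * φ + Int.fib (n - 1) := by
  have h : φ - ψ ≠ 0 := by rw [goldenRatio_sub_goldenConj]; positivity
  rw [coe_intFib_eq, coe_intFib_eq, zpow_sub_one₀ goldenRatio_ne_zero,
    zpow_sub_one₀ goldenConj_ne_zero, inv_goldenRatio, inv_goldenConj,
    ← goldenRatio_sub_goldenConj]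
  field_simp
  ring

lemma goldenConj_zpow_eq (n : ℤ) : ψ ^ n = Int.fib n * ψ + Int.fib (n - 1) := by
  have h : φ - ψ ≠ 0 := by rw [goldenRatio_sub_goldenConj]; positivity
  rw [coe_intFib_eq, coe_intFib_eq, zpow_sub_one₀ goldenRatio_ne_zero,
    zpow_sub_one₀ goldenConj_ne_zero, inv_goldenRatio, inv_goldenConj,
    ← goldenRatio_sub_goldenConj]
  field_simp
  ring

lemma goldenRatio_pow_add_goldenConj_pow (k : ℕ) :
    φ ^ (k + 1) + ψ ^ (k + 1) = Nat.fib (k + 2) + Nat.fib k := by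
  rw [← goldenRatio_mul_fib_succ_add_fib, ← goldenConj_mul_fib_succ_add_fib, Nat.fib_add_two]
  push_cast
  linear_combination (Nat.fib (k + 1) : ℝ) * goldenRatio_add_goldenConj

def NonAdjacent (E : Finset ℤ) : Prop := ∀ i ∈ E, i + 1 ∉ E

lemma NonAdjacent.mono {E F : Finset ℤ} (hE : NonAdjacent E) (hF : F ⊆ E) :
    NonAdjacent F :=
  fun i hi hi1 => hE i (hF hi) (hF hi1)

lemma NonAdjacent.map_neg {E : Finset ℤ} (hE : NonAdjacent E) :
    NonAdjacent (E.map (Equiv.neg ℤ).toEmbedding) := by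
  intro i hi hi1
  simp only [Finset.mem_map_equiv, Equiv.neg_symm, Equiv.neg_apply] at hi hi1
  exact hE (-(i + 1)) hi1 (by rwa [neg_add_rev, neg_add_cancel_comm])

lemma NonAdjacent.add_two_le {E : Finset ℤ} (hE : NonAdjacent E) {i j : ℤ} (hi : i ∈ E)
    (hj : j ∈ E) (hij : i < j) : i + 2 ≤ j := by
  by_contra h
  exact hE i hi (by rwa [show i + 1 = j by omega])

noncomputable def phiSum (E : Finset ℤ) : ℝ := ∑ i ∈ E, φ ^ i

noncomputable def conjSum (E : Finset ℤ) : ℝ := ∑ i ∈ E, ψ ^ i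

lemma phiSum_erase {E : Finset ℤ} {i : ℤ} (hi : i ∈ E) :
    phiSum (E.erase i) = phiSum E - φ ^ i :=
  Finset.sum_erase_eq_sub hi

lemma conjSum_erase {E : Finset ℤ} {i : ℤ} (hi : i ∈ E) :
    conjSum (E.erase i) = conjSum E - ψ ^ i :=
  Finset.sum_erase_eq_sub hi

lemma zpow_le_phiSum {E : Finset ℤ} {i : ℤ} (hi : i ∈ E) : φ ^ i ≤ phiSum E :=
  Finset.single_le_sum (fun j _ => (zpow_pos goldenRatio_pos j).le) hi

lemma phiSum_lt {E : Finset ℤ} (hE : NonAdjacent E) {t : ℤ} (ht : ∀ i ∈ E, i ≤ t) :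
    phiSum E < φ ^ (t + 1) := by
  induction E using Finset.strongInduction generalizing t with
  | _ E ih =>
  rcases E.eq_empty_or_nonempty with rfl | hne
  · simpa [phiSum] using zpow_pos goldenRatio_pos (t + 1)
  set M := E.max' hne
  have hM : M ∈ E := E.max'_mem hne
  have hbelow : ∀ i ∈ E.erase M, i ≤ M - 2 := fun i hi => by
    have hiE := Finset.mem_of_mem_erase hi
    linarith [hE.add_two_le hiE hM ((E.le_max' i hiE).lt_of_ne (Finset.ne_of_mem_erase hi))]
  have hrest := ih _ (Finset.erase_ssubset hM) (hE.mono (Finset.erase_subset _ _)) hbelow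
  have hMt : φ ^ (M + 1) ≤ φ ^ (t + 1) := goldenRatio_zpow_le_zpow.2 (by linarith [ht M hM])
  have hstep := goldenRatio_zpow_add_two (M - 1)
  rw [phiSum_erase hM] at hrest
  rw [show M - 1 + 2 = M + 1 by ring, show M - 1 + 1 = M by ring] at hstep
  rw [show M - 2 + 1 = M - 1 by ring] at hrest
  linarith

lemma sum_zpow_neg_lt {E : Finset ℤ} (hE : NonAdjacent E) {s : ℤ} (hs : ∀ i ∈ E, s ≤ i) :
    ∑ i ∈ E, φ ^ (-i) < φ ^ (1 - s) := by
  have := phiSum_lt hE.map_neg (t := -s) (by simpa using fun i hi => le_neg.2 (hs (-i) hi))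
  rwa [phiSum, Finset.sum_map, neg_add_eq_sub] at this

lemma conjSum_lt {E : Finset ℤ} (hE : NonAdjacent E) {s : ℤ}
    (hs : ∀ i ∈ E, Even i → s ≤ i) : conjSum E < φ ^ (1 - s) := by
  have hodd : ∑ i ∈ E with ¬Even i, ψ ^ i ≤ 0 := Finset.sum_nonpos fun i hi => by
    rw [goldenConj_zpow_of_odd (Int.not_even_iff_odd.1 (Finset.mem_filter.1 hi).2), neg_nonpos]
    exact (zpow_pos goldenRatio_pos _).le
  have heven : ∑ i ∈ E with Even i, ψ ^ i < φ ^ (1 - s) := by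
    rw [Finset.sum_congr rfl fun i hi => goldenConj_zpow_of_even (Finset.mem_filter.1 hi).2]
    exact sum_zpow_neg_lt (hE.mono (Finset.filter_subset _ _))
      fun i hi => hs i (Finset.mem_of_mem_filter i hi) (Finset.mem_filter.1 hi).2
  rw [conjSum, ← Finset.sum_filter_add_sum_filter_not E Even]
  linarith

lemma neg_lt_conjSum {E : Finset ℤ} (hE : NonAdjacent E) {s : ℤ}
    (hs : ∀ i ∈ E, Odd i → s ≤ i) : -φ ^ (1 - s) < conjSum E := by
  have heven : 0 ≤ ∑ i ∈ E with ¬Odd i, ψ ^ i := Finset.sum_nonneg fun i hi => by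
    rw [goldenConj_zpow_of_even (Int.not_odd_iff_even.1 (Finset.mem_filter.1 hi).2)]
    exact (zpow_pos goldenRatio_pos _).le
  have hodd : -φ ^ (1 - s) < ∑ i ∈ E with Odd i, ψ ^ i := by
    rw [Finset.sum_congr rfl fun i hi => goldenConj_zpow_of_odd (Finset.mem_filter.1 hi).2,
      Finset.sum_neg_distrib, neg_lt_neg_iff]
    exact sum_zpow_neg_lt (hE.mono (Finset.filter_subset _ _))
      fun i hi => hs i (Finset.mem_of_mem_filter i hi) (Finset.mem_filter.1 hi).2
  rw [conjSum, ← Finset.sum_filter_add_sum_filter_not E Odd]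
  linarith

lemma zpow_lt_conjSum_of_min_even {E : Finset ℤ} (hE : NonAdjacent E) {μ : ℤ} (hμ : μ ∈ E)
    (hmin : ∀ i ∈ E, μ ≤ i) (heven : Even μ) : φ ^ (-μ - 1) < conjSum E := by
  have hrest := neg_lt_conjSum (hE.mono (Finset.erase_subset μ E)) (s := μ + 3)
    fun i hi hodd => by
    have := hE.add_two_le hμ (Finset.mem_of_mem_erase hi)
      ((hmin i (Finset.mem_of_mem_erase hi)).lt_of_ne (Finset.ne_of_mem_erase hi).symm)
    obtain ⟨a, rfl⟩ := heven; obtain ⟨b, rfl⟩ := hodd; omega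
  have hstep := goldenRatio_zpow_add_two (-μ - 2)
  rw [conjSum_erase hμ, goldenConj_zpow_of_even heven] at hrest
  rw [show -μ - 2 + 2 = -μ by ring, show -μ - 2 + 1 = -μ - 1 by ring] at hstep
  rw [show 1 - (μ + 3) = -μ - 2 by ring] at hrest
  linarith

lemma conjSum_lt_neg_of_min_odd {E : Finset ℤ} (hE : NonAdjacent E) {μ : ℤ} (hμ : μ ∈ E)
    (hmin : ∀ i ∈ E, μ ≤ i) (hodd : Odd μ) : conjSum E < -φ ^ (-μ - 1) := by
  have hrest := conjSum_lt (hE.mono (Finset.erase_subset μ E)) (s := μ + 3)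
    fun i hi heven => by
    have := hE.add_two_le hμ (Finset.mem_of_mem_erase hi)
      ((hmin i (Finset.mem_of_mem_erase hi)).lt_of_ne (Finset.ne_of_mem_erase hi).symm)
    obtain ⟨a, rfl⟩ := heven; obtain ⟨b, rfl⟩ := hodd; omega
  have hstep := goldenRatio_zpow_add_two (-μ - 2)
  rw [conjSum_erase hμ, goldenConj_zpow_of_odd hodd] at hrest
  rw [show -μ - 2 + 2 = -μ by ring, show -μ - 2 + 1 = -μ - 1 by ring] at hstep
  rw [show 1 - (μ + 3) = -μ - 2 by ring] at hrest
  linarith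

lemma eq_zero_of_intCast_mul_goldenRatio_add_intCast_eq {p q r : ℤ}
    (h : (p : ℝ) * φ + q = r) : p = 0 := by
  by_contra hp
  exact ((goldenRatio_irrational.intCast_mul hp).add_intCast q).ne_int r h

/-- `phiSum E` and `conjSum E` have the same integer coordinates in the bases `φ, 1` and
`ψ, 1`, and these are determined by `phiSum E` because `φ` is irrational. -/
lemma conjSum_eq_of_phiSum_eq {E : Finset ℤ} {a c k : ℤ} (h : phiSum E = a + c * φ ^ k) :
    conjSum E = a + c * ψ ^ k := by
  set S := ∑ i ∈ E, Int.fib i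
  set T := ∑ i ∈ E, Int.fib (i - 1)
  have hφ : phiSum E = S * φ + T := by
    simp only [phiSum, goldenRatio_zpow_eq, Finset.sum_add_distrib, ← Finset.sum_mul, S, T,
      Int.cast_sum]
  have hψ : conjSum E = S * ψ + T := by
    simp only [conjSum, goldenConj_zpow_eq, Finset.sum_add_distrib, ← Finset.sum_mul, S, T,
      Int.cast_sum]
  rw [hφ, goldenRatio_zpow_eq] at h
  have hS : S - c * Int.fib k = 0 :=
    eq_zero_of_intCast_mul_goldenRatio_add_intCast_eq (q := T - c * Int.fib (k - 1)) (r := a)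
      (by push_cast; linarith)
  have hS' : (S : ℝ) = c * Int.fib k := by exact_mod_cast sub_eq_zero.1 hS
  rw [hψ, goldenConj_zpow_eq, hS']
  rw [hS'] at h
  linear_combination h

lemma goldenRatio_zpow_add_zpow_neg_of_odd {n : ℕ} (hn : Odd n) :
    φ ^ ((n : ℤ) + 1) + φ ^ (-((n : ℤ) + 1)) = Nat.fib (n + 2) + Nat.fib n := by
  rw [← goldenConj_zpow_of_even (by simpa [parity_simps] using hn),
    ← goldenRatio_pow_add_goldenConj_pow]
  norm_cast

lemma goldenRatio_zpow_sub_zpow_neg_of_even {n : ℕ} (hn : Even n) :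
    φ ^ ((n : ℤ) + 1) - φ ^ (-((n : ℤ) + 1)) = Nat.fib (n + 2) + Nat.fib n := by
  rw [sub_eq_add_neg, ← goldenConj_zpow_of_odd (by simpa [parity_simps] using hn),
    ← goldenRatio_pow_add_goldenConj_pow]
  norm_cast

lemma _root_.Even.eq_zero_or_eq_add_two {p : ℕ} (hp : Even p) : p = 0 ∨ ∃ q, p = q + 2 := by
  obtain ⟨r, rfl⟩ := hp
  rcases r with _ | r
  · exact .inl rfl
  · exact .inr ⟨2 * r, by ring⟩

lemma phiSum_nonneg (E : Finset ℤ) : 0 ≤ phiSum E :=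
  Finset.sum_nonneg fun i _ => (zpow_pos goldenRatio_pos i).le

lemma exists_eq_add_of_phiSum_eq {E : Finset ℤ} {n L : ℕ} {c : ℝ} (hc : 0 ≤ c)
    (h : phiSum E = n - L - c) : ∃ m : ℕ, n = m + L ∧ phiSum E = m - c := by
  have hL : L ≤ n := by
    have := phiSum_nonneg E
    exact_mod_cast (show (L : ℝ) ≤ n by linarith)
  exact ⟨n - L, by omega, by rw [h, Nat.cast_sub hL]⟩

lemma even_min'_and_max'_eq {E : Finset ℤ} (hE : NonAdjacent E) (hne : E.Nonempty) {n : ℕ}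
    (hn : phiSum E = n) :
    Even (E.min' hne) ∧ (E.max' hne = -E.min' hne ∨ E.max' hne = -E.min' hne - 1) := by
  set μ := E.min' hne
  set M := E.max' hne
  have hmin : ∀ i ∈ E, μ ≤ i := fun i hi => E.min'_le i hi
  have hconj : conjSum E = n := by
    simpa using conjSum_eq_of_phiSum_eq (a := n) (c := 0) (k := 0) (by simpa using hn)
  have heven : Even μ := by
    by_contra hodd
    have := conjSum_lt_neg_of_min_odd hE (E.min'_mem hne) hmin (Int.not_even_iff_odd.1 hodd)
    have := zpow_pos goldenRatio_pos (-μ - 1)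
    have : (0 : ℝ) ≤ n := n.cast_nonneg
    linarith
  have h1 : φ ^ M < φ ^ (1 - μ) :=
    (hn ▸ zpow_le_phiSum (E.max'_mem hne)).trans_lt
      (hconj ▸ conjSum_lt hE fun i hi _ => hmin i hi)
  have h2 : φ ^ (-μ - 1) < φ ^ (M + 1) :=
    (hconj ▸ zpow_lt_conjSum_of_min_even hE (E.min'_mem hne) hmin heven).trans
      (hn ▸ phiSum_lt hE fun i hi => E.le_max' i hi)
  rw [goldenRatio_zpow_lt_zpow] at h1 h2
  exact ⟨heven, by omega⟩

def ZeckBound (E : Finset ℤ) : Prop := ∀ n : ℕ, phiSum E = n → zeckLen n ≤ E.card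

/-- Here `E` together with the extra digit `-(p + 2)` is a φ-representation of `m`. -/
def ShiftedZeckBound (E : Finset ℤ) : Prop :=
  ∀ m p : ℕ, Even p → (∀ i ∈ E, -((p : ℤ) + 2) ≤ i ∧ i ≤ p + 1) →
    phiSum E = m - φ ^ (-((p : ℤ) + 2)) →
      zeckLen m ≤ E.card ∧ (m < Nat.fib (p + 1) → zeckLen m < E.card)

lemma exists_eq_add_of_phiSum_eq_sub_evenPair {F : Finset ℤ} {x k : ℕ} (hk : Odd k)
    (h : phiSum F = x - (φ ^ ((k : ℤ) + 1) + φ ^ (-((k : ℤ) + 1)))) :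
    ∃ m : ℕ, x = m + Nat.fib (k + 2) + Nat.fib k ∧ phiSum F = m := by
  rw [goldenRatio_zpow_add_zpow_neg_of_odd hk] at h
  obtain ⟨m, rfl, hm⟩ := exists_eq_add_of_phiSum_eq (E := F) (n := x)
    (L := Nat.fib (k + 2) + Nat.fib k) le_rfl (by push_cast; linarith)
  exact ⟨m, by ring, by simpa using hm⟩

lemma exists_eq_add_of_phiSum_eq_sub_oddPair {F : Finset ℤ} {x p : ℕ} (hp : Even p)
    (h : phiSum F = x - (φ ^ ((p : ℤ) + 1) + φ ^ (-((p : ℤ) + 2)))) :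
    ∃ m : ℕ, x = m + Nat.fib (p + 2) + Nat.fib p ∧ phiSum F = m - φ ^ (-(p : ℤ)) := by
  have hlucas := goldenRatio_zpow_sub_zpow_neg_of_even hp
  have hstep := goldenRatio_zpow_add_two (-((p : ℤ) + 2))
  rw [show -((p : ℤ) + 2) + 2 = -p by ring, show -((p : ℤ) + 2) + 1 = -((p : ℤ) + 1) by ring]
    at hstep
  obtain ⟨m, rfl, hm⟩ := exists_eq_add_of_phiSum_eq (E := F) (n := x)
    (L := Nat.fib (p + 2) + Nat.fib p) (zpow_pos goldenRatio_pos (-(p : ℤ))).le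
    (by push_cast; linarith)
  exact ⟨m, by ring, hm⟩

lemma exists_evenPair_or_oddPair {E : Finset ℤ} (hE : NonAdjacent E) {n : ℕ}
    (hn : phiSum E = n) (h3 : 3 ≤ n) :
    (∃ k : ℕ, Odd k ∧ (k : ℤ) + 1 ∈ E ∧ -((k : ℤ) + 1) ∈ E) ∨
    (∃ p : ℕ, Even p ∧ (p : ℤ) + 3 ∈ E ∧ -((p : ℤ) + 4) ∈ E ∧
      ∀ i ∈ E, -((p : ℤ) + 4) ≤ i ∧ i ≤ p + 3) := by
  have hne : E.Nonempty := by
    rw [Finset.nonempty_iff_ne_empty]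
    rintro rfl
    have : (n : ℝ) = 0 := by simpa [phiSum] using hn.symm
    exact (show n ≠ 0 by omega) (by exact_mod_cast this)
  obtain ⟨⟨r, hr⟩, hmax⟩ := even_min'_and_max'_eq hE hne hn
  have hμ := E.min'_mem hne
  have hM := E.max'_mem hne
  have hM2 : 2 ≤ E.max' hne := by
    have h1 : (n : ℝ) < φ ^ (E.max' hne + 1) := hn ▸ phiSum_lt hE fun i hi => E.le_max' i hi
    have h2 : φ ^ (2 : ℤ) < n := by
      have : (3 : ℝ) ≤ n := by exact_mod_cast h3
      norm_cast
      linarith [goldenRatio_sq, goldenRatio_lt_two]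
    have := goldenRatio_zpow_lt_zpow.1 (h2.trans h1)
    omega
  rcases hmax with hmax | hmax
  · refine .inl ⟨(E.max' hne - 1).toNat, ⟨(-r - 1).toNat, by omega⟩, ?_, ?_⟩
    · rwa [show ((E.max' hne - 1).toNat : ℤ) + 1 = E.max' hne by omega]
    · rwa [show -(((E.max' hne - 1).toNat : ℤ) + 1) = E.min' hne by omega]
  · refine .inr ⟨(E.max' hne - 3).toNat, ⟨(-r - 2).toNat, by omega⟩, ?_, ?_, fun i hi => ?_⟩
    · rwa [show ((E.max' hne - 3).toNat : ℤ) + 3 = E.max' hne by omega]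
    · rwa [show -(((E.max' hne - 3).toNat : ℤ) + 4) = E.min' hne by omega]
    · have := E.min'_le i hi
      have := E.le_max' i hi
      omega

lemma zeckLen_le_card_of_le_two {E : Finset ℤ} {n : ℕ} (hn : phiSum E = n) (h2 : n ≤ 2) :
    zeckLen n ≤ E.card := by
  rcases E.eq_empty_or_nonempty with rfl | hne
  · have : (n : ℝ) = 0 := by simpa [phiSum] using hn.symm
    simp [show n = 0 by exact_mod_cast this]
  have hcard := Finset.card_pos.2 hne
  interval_cases n
  · simp
  · exact (zeckLen_fib_le_one 1).trans hcard
  · exact (zeckLen_fib_le_one 3).trans hcard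

lemma zeckLen_le_card_of_evenPair {E : Finset ℤ} {n k : ℕ} (hk : Odd k)
    (htop : (k : ℤ) + 1 ∈ E) (hbot : -((k : ℤ) + 1) ∈ E) (hn : phiSum E = n)
    (hF : ZeckBound ((E.erase ((k : ℤ) + 1)).erase (-((k : ℤ) + 1)))) :
    zeckLen n ≤ E.card := by
  have hbot' : -((k : ℤ) + 1) ∈ E.erase ((k : ℤ) + 1) := Finset.mem_erase.2 ⟨by omega, hbot⟩
  have hcard := Finset.card_erase_add_one hbot'
  rw [← Finset.card_erase_add_one htop, ← hcard]
  obtain ⟨m, rfl, hm⟩ := exists_eq_add_of_phiSum_eq_sub_evenPair hk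
    (by rw [phiSum_erase hbot', phiSum_erase htop, hn]; ring)
  have := hF m hm
  have := zeckLen_add_fib_add_fib_le m (k + 2) k
  omega

lemma zeckLen_le_card_of_oddPair {E : Finset ℤ} {n p : ℕ} (hE : NonAdjacent E) (hp : Even p)
    (htop : (p : ℤ) + 3 ∈ E) (hbot : -((p : ℤ) + 4) ∈ E)
    (hwin : ∀ i ∈ E, -((p : ℤ) + 4) ≤ i ∧ i ≤ p + 3) (hn : phiSum E = n)
    (hF : ShiftedZeckBound ((E.erase ((p : ℤ) + 3)).erase (-((p : ℤ) + 4)))) :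
    zeckLen n ≤ E.card := by
  have hbot' : -((p : ℤ) + 4) ∈ E.erase ((p : ℤ) + 3) := Finset.mem_erase.2 ⟨by omega, hbot⟩
  have hcard := Finset.card_erase_add_one hbot'
  rw [← Finset.card_erase_add_one htop, ← hcard]
  obtain ⟨m, rfl, hm⟩ := exists_eq_add_of_phiSum_eq_sub_oddPair (p := p + 2)
    (by simpa [parity_simps] using hp)
    (by rw [phiSum_erase hbot', phiSum_erase htop, hn]; push_cast; ring_nf)
  have hwinF : ∀ i ∈ (E.erase ((p : ℤ) + 3)).erase (-((p : ℤ) + 4)),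
      -((p : ℤ) + 2) ≤ i ∧ i ≤ p + 1 := fun i hi => by
    have hiE := Finset.mem_of_mem_erase (Finset.mem_of_mem_erase hi)
    have hi' := hwin i hiE
    have := hE.add_two_le hbot hiE (lt_of_le_of_ne hi'.1 (Finset.ne_of_mem_erase hi).symm)
    have := hE.add_two_le hiE htop
      (lt_of_le_of_ne hi'.2 (Finset.ne_of_mem_erase (Finset.mem_of_mem_erase hi)))
    omega
  have := (hF m p hp hwinF (by rw [hm]; push_cast; ring_nf)).1
  have := zeckLen_add_fib_add_fib_le m (p + 2 + 2) (p + 2)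
  omega

lemma zeckBound_of_ssubset {E : Finset ℤ} (hE : NonAdjacent E)
    (ih : ∀ F ⊂ E, ZeckBound F ∧ ShiftedZeckBound F) : ZeckBound E := by
  intro n hn
  by_cases hn2 : n ≤ 2
  · exact zeckLen_le_card_of_le_two hn hn2
  rcases exists_evenPair_or_oddPair hE hn (by omega) with
    ⟨k, hk, htop, hbot⟩ | ⟨p, hp, htop, hbot, hwin⟩
  · exact zeckLen_le_card_of_evenPair hk htop hbot hn
      (ih _ ((Finset.erase_ssubset htop).trans_le' (Finset.erase_subset _ _))).1
  · exact zeckLen_le_card_of_oddPair hE hp htop hbot hwin hn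
      (ih _ ((Finset.erase_ssubset htop).trans_le' (Finset.erase_subset _ _))).2

section Shifted

variable {E : Finset ℤ} {m p : ℕ}

lemma succ_notMem_of_neg_succ_mem (hE : NonAdjacent E) (hp : Even p)
    (hmem : -((p : ℤ) + 1) ∈ E) (hmin : ∀ i ∈ E, -((p : ℤ) + 1) ≤ i)
    (hsum : phiSum E = m - φ ^ (-((p : ℤ) + 2))) (hconj : conjSum E = m - φ ^ ((p : ℤ) + 2)) :
    (p : ℤ) + 1 ∉ E := by
  intro h
  have h1 := zpow_le_phiSum h
  have h2 := conjSum_lt_neg_of_min_odd hE hmem hmin (by simpa [parity_simps] using hp)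
  have h3 := goldenRatio_zpow_add_two p
  have h4 := zpow_pos goldenRatio_pos (-((p : ℤ) + 2))
  rw [show -(-((p : ℤ) + 1)) - 1 = p by ring] at h2
  linarith

lemma succ_mem_of_neg_succ_notMem (hE : NonAdjacent E) (hp : Even p)
    (hwin : ∀ i ∈ E, -(p : ℤ) ≤ i ∧ i ≤ p + 1)
    (hsum : phiSum E = m - φ ^ (-((p : ℤ) + 2))) (hconj : conjSum E = m - φ ^ ((p : ℤ) + 2)) :
    (p : ℤ) + 1 ∈ E := by
  by_contra htop
  have hup := phiSum_lt hE (t := p) fun i hi => by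
    have := (hwin i hi).2
    have : i ≠ p + 1 := fun h => htop (h ▸ hi)
    omega
  have hlow := neg_lt_conjSum hE (s := -p + 1) fun i hi hodd => by
    have := (hwin i hi).1
    obtain ⟨r, rfl⟩ := hp
    obtain ⟨t, rfl⟩ := hodd
    omega
  rw [show 1 - (-(p : ℤ) + 1) = p by ring] at hlow
  -- `φ ^ (p + 1) < m < φ ^ (p + 1) + φ ^ (-(p + 2))` traps `m` strictly between `L` and `L + 1`
  -- for the Lucas number `L = fib (p + 2) + fib p`
  have hlucas := goldenRatio_zpow_sub_zpow_neg_of_even hp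
  have hstep := goldenRatio_zpow_add_two p
  have hstep' := goldenRatio_zpow_add_two (-((p : ℤ) + 2))
  rw [show -((p : ℤ) + 2) + 2 = -p by ring, show -((p : ℤ) + 2) + 1 = -((p : ℤ) + 1) by ring]
    at hstep'
  have hsmall : φ ^ (-(p : ℤ)) ≤ 1 := by
    simpa using goldenRatio_zpow_le_zpow.2 (show -(p : ℤ) ≤ 0 by omega)
  have hpos := zpow_pos goldenRatio_pos (-((p : ℤ) + 1))
  have hgt : Nat.fib (p + 2) + Nat.fib p < m := by
    exact_mod_cast (show ((Nat.fib (p + 2) + Nat.fib p : ℕ) : ℝ) < m by push_cast; linarith)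
  have hlt : m < Nat.fib (p + 2) + Nat.fib p + 1 := by
    exact_mod_cast (show (m : ℝ) < (Nat.fib (p + 2) + Nat.fib p + 1 : ℕ) by push_cast; linarith)
  omega

lemma lt_fib_add_fib_of_phiSum_eq (hE : NonAdjacent E) (hp : Even p)
    (hmax : ∀ i ∈ E, i ≤ p + 1) (hsum : phiSum E = m - φ ^ (-((p : ℤ) + 2))) :
    m < Nat.fib (p + 3) + Nat.fib (p + 1) := by
  have hlucas := goldenRatio_zpow_add_zpow_neg_of_odd (n := p + 1)
    (by simpa [parity_simps] using hp)
  have hup := phiSum_lt hE hmax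
  push_cast at hlucas
  rw [show (p : ℤ) + 1 + 1 = p + 2 by ring] at hlucas hup
  exact_mod_cast (show (m : ℝ) < (Nat.fib (p + 3) + Nat.fib (p + 1) : ℕ) by push_cast; linarith)

lemma shiftedZeckBound_of_neg_succ_mem (hE : NonAdjacent E)
    (ih : ∀ F ⊂ E, ZeckBound F ∧ ShiftedZeckBound F) (hp : Even p)
    (hmem : -((p : ℤ) + 1) ∈ E) (hwin : ∀ i ∈ E, -((p : ℤ) + 1) ≤ i ∧ i ≤ p + 1)
    (hsum : phiSum E = m - φ ^ (-((p : ℤ) + 2))) (hconj : conjSum E = m - φ ^ ((p : ℤ) + 2)) :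
    zeckLen m ≤ E.card ∧ (m < Nat.fib (p + 1) → zeckLen m < E.card) := by
  have htop := succ_notMem_of_neg_succ_mem hE hp hmem (fun i hi => (hwin i hi).1) hsum hconj
  set F := E.erase (-((p : ℤ) + 1))
  have hF : F ⊂ E := Finset.erase_ssubset hmem
  have hcardF : F.card + 1 = E.card := Finset.card_erase_add_one hmem
  have hsumF : phiSum F = m - φ ^ (-(p : ℤ)) := by
    have := goldenRatio_zpow_add_two (-((p : ℤ) + 2))
    rw [show -((p : ℤ) + 2) + 2 = -p by ring, show -((p : ℤ) + 2) + 1 = -((p : ℤ) + 1) by ring]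
      at this
    rw [phiSum_erase hmem, hsum]
    linarith
  obtain rfl | ⟨p, rfl⟩ := hp.eq_zero_or_eq_add_two
  · obtain ⟨m', rfl, hm'⟩ := exists_eq_add_of_phiSum_eq (E := F) (n := m) (L := 1) le_rfl
      (by simpa using hsumF)
    have := (ih F hF).1 m' (by simpa using hm')
    have : zeckLen (m' + 1) ≤ zeckLen m' + 1 := by simpa using zeckLen_add_fib_le m' 1
    exact ⟨by omega, fun h => by simp at h⟩
  push_cast at *
  by_cases hp2 : (p : ℤ) + 2 ∈ E
  · have hp2F : (p : ℤ) + 2 ∈ F := Finset.mem_erase.2 ⟨by omega, hp2⟩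
    obtain ⟨m', rfl, hm'⟩ := exists_eq_add_of_phiSum_eq_sub_evenPair (F := F.erase ((p : ℤ) + 2))
      (k := p + 1) (by simpa [parity_simps] using hp)
      (by rw [phiSum_erase hp2F, hsumF]; push_cast; ring_nf)
    have := (ih _ ((Finset.erase_ssubset hp2F).trans hF)).1 m' hm'
    have := zeckLen_add_fib_add_fib_le m' (p + 1 + 2) (p + 1)
    have := Finset.card_erase_add_one hp2F
    exact ⟨by omega, fun h => by have : Nat.fib (p + 2 + 1) = Nat.fib (p + 1 + 2) := rfl; omega⟩
  · have hwinF : ∀ i ∈ F, -((p : ℤ) + 2) ≤ i ∧ i ≤ p + 1 := fun i hi => by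
      have hiE := Finset.mem_of_mem_erase hi
      have := hwin i hiE
      have := Finset.ne_of_mem_erase hi
      have : i ≠ p + 2 := fun h => hp2 (h ▸ hiE)
      have : i ≠ p + 2 + 1 := fun h => htop (h ▸ hiE)
      omega
    have := ((ih F hF).2 m p (by simpa [parity_simps] using hp) hwinF (by simpa using hsumF)).1
    omega

lemma shiftedZeckBound_of_neg_succ_notMem (hE : NonAdjacent E)
    (ih : ∀ F ⊂ E, ZeckBound F ∧ ShiftedZeckBound F) (hp : Even p)
    (hwin : ∀ i ∈ E, -(p : ℤ) ≤ i ∧ i ≤ p + 1)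
    (hsum : phiSum E = m - φ ^ (-((p : ℤ) + 2))) (hconj : conjSum E = m - φ ^ ((p : ℤ) + 2)) :
    zeckLen m ≤ E.card ∧ (m < Nat.fib (p + 1) → zeckLen m < E.card) := by
  have htop := succ_mem_of_neg_succ_notMem hE hp hwin hsum hconj
  have hupper := lt_fib_add_fib_of_phiSum_eq hE hp (fun i hi => (hwin i hi).2) hsum
  set F := E.erase ((p : ℤ) + 1)
  have hF : F ⊂ E := Finset.erase_ssubset htop
  have hcardF : F.card + 1 = E.card := Finset.card_erase_add_one htop
  obtain ⟨m', rfl, hm'⟩ := exists_eq_add_of_phiSum_eq_sub_oddPair (F := F) hp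
    (by rw [phiSum_erase htop, hsum]; ring)
  refine ⟨?_, fun h => by have := Nat.fib_mono (show p + 1 ≤ p + 2 by omega); omega⟩
  obtain rfl | ⟨p, rfl⟩ := hp.eq_zero_or_eq_add_two
  · obtain ⟨m'', rfl, hm''⟩ := exists_eq_add_of_phiSum_eq (E := F) (n := m') (L := 1) le_rfl
      (by simpa using hm')
    have := (ih F hF).1 m'' (by simpa using hm'')
    have := zeckLen_add_fib_le m'' 3
    rw [show m'' + 1 + Nat.fib (0 + 2) + Nat.fib 0 = m'' + Nat.fib 3 from rfl]
    omega
  have hwinF : ∀ i ∈ F, -((p : ℤ) + 2) ≤ i ∧ i ≤ p + 1 := fun i hi => by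
    have hiE := Finset.mem_of_mem_erase hi
    have := hwin i hiE
    have := Finset.ne_of_mem_erase hi
    have : i ≠ ((p + 2 : ℕ) : ℤ) := fun h => hE _ (h ▸ hiE) htop
    push_cast at *
    omega
  have hF' := (ih F hF).2 m' p (by simpa [parity_simps] using hp) hwinF (by simpa using hm')
  rw [show p + 2 + 3 = p + 5 from rfl, show p + 2 + 2 = p + 4 from rfl,
    show p + 2 + 1 = p + 3 from rfl] at hupper
  rw [show p + 2 + 2 = p + 4 from rfl]
  have := zeckLen_add_fib_add_fib_le m' (p + 4) (p + 2)
  by_cases hm'small : m' < Nat.fib (p + 1)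
  · have := hF'.2 hm'small
    omega
  have f3 : Nat.fib (p + 3) = Nat.fib (p + 1) + Nat.fib (p + 2) := Nat.fib_add_two
  have f4 : Nat.fib (p + 4) = Nat.fib (p + 2) + Nat.fib (p + 3) := Nat.fib_add_two
  have f5 : Nat.fib (p + 5) = Nat.fib (p + 3) + Nat.fib (p + 4) := Nat.fib_add_two
  have := Nat.fib_mono (show p + 1 ≤ p + 2 by omega)
  have := zeckLen_add_fib_add_fib_le_add_one (not_lt.1 hm'small)
    (show m' < Nat.fib (p + 4) by omega)
  have := hF'.1
  omega

lemma shiftedZeckBound_of_ssubset (hE : NonAdjacent E)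
    (ih : ∀ F ⊂ E, ZeckBound F ∧ ShiftedZeckBound F) : ShiftedZeckBound E := by
  intro m p hp hwin hsum
  have hconj : conjSum E = m - φ ^ ((p : ℤ) + 2) := by
    have := conjSum_eq_of_phiSum_eq (a := m) (c := -1) (k := -((p : ℤ) + 2))
      (by simpa [sub_eq_add_neg] using hsum)
    rwa [goldenConj_zpow_of_even (by simpa [parity_simps] using hp), neg_neg, Int.cast_neg,
      Int.cast_one, neg_one_mul, ← sub_eq_add_neg, Int.cast_natCast] at this
  have hbottom : -((p : ℤ) + 2) ∉ E := by
    intro h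
    have h1 := zpow_lt_conjSum_of_min_even hE h (fun i hi => (hwin i hi).1)
      (by simpa [parity_simps] using hp)
    have h2 := phiSum_lt hE fun i hi => (hwin i hi).2
    have h3 : φ ^ (-((p : ℤ) + 2)) ≤ φ ^ (-(-((p : ℤ) + 2)) - 1) :=
      goldenRatio_zpow_le_zpow.2 (by omega)
    rw [show (p : ℤ) + 1 + 1 = p + 2 by ring] at h2
    linarith
  by_cases hmem : -((p : ℤ) + 1) ∈ E
  · refine shiftedZeckBound_of_neg_succ_mem hE ih hp hmem (fun i hi => ?_) hsum hconj
    have := hwin i hi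
    have : i ≠ -((p : ℤ) + 2) := fun h => hbottom (h ▸ hi)
    omega
  · refine shiftedZeckBound_of_neg_succ_notMem hE ih hp (fun i hi => ?_) hsum hconj
    have := hwin i hi
    have : i ≠ -((p : ℤ) + 2) := fun h => hbottom (h ▸ hi)
    have : i ≠ -((p : ℤ) + 1) := fun h => hmem (h ▸ hi)
    omega

end Shifted

theorem zeckBound {E : Finset ℤ} (hE : NonAdjacent E) : ZeckBound E := by
  suffices ZeckBound E ∧ ShiftedZeckBound E from this.1
  induction E using Finset.strongInduction with
  | _ E ih =>
  have ih' : ∀ F ⊂ E, ZeckBound F ∧ ShiftedZeckBound F := fun F hF => ih F hF (hE.mono hF.subset)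
  exact ⟨zeckBound_of_ssubset hE ih', shiftedZeckBound_of_ssubset hE ih'⟩

lemma eq_one_of_mem_support {α : Type*} {f : α →₀ ℕ} (hf : ∀ i, f i ≤ 1) {i : α}
    (hi : i ∈ f.support) : f i = 1 :=
  le_antisymm (hf i) (Nat.one_le_iff_ne_zero.2 (Finsupp.mem_support_iff.1 hi))

lemma sum_support_eq_card {α : Type*} {f : α →₀ ℕ} (hf : ∀ i, f i ≤ 1) :
    ∑ i ∈ f.support, f i = f.support.card := by
  rw [Finset.card_eq_sum_ones]
  exact Finset.sum_congr rfl fun i hi => eq_one_of_mem_support hf hi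

lemma add_one_notMem_support {α : Type*} [Add α] [One α] {f : α →₀ ℕ}
    (hf : ∀ i, f i * f (i + 1) = 0) {i : α} (hi : i ∈ f.support) : i + 1 ∉ f.support :=
  fun h => mul_ne_zero (Finsupp.mem_support_iff.1 hi) (Finsupp.mem_support_iff.1 h) (hf i)

end Gerdemann

open Gerdemann

/-- Gerdemann's conjecture: the digit sum of the Zeckendorf representation of `n` is at
most the digit sum of the canonical base-φ representation of `n`. Here `d n` denotes
the canonical φ-representation of `n`. -/
theorem zeckendorf_digit_sum_le_phi_digit_sum
    (d : ℕ → ℤ →₀ ℕ) (hd : ∀ n : ℕ, IsCanonRep n (d n))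
    (n : ℕ) (b : ℕ →₀ ℕ) (hb1 : ∀ i, b i ≤ 1) (hb2 : ∀ i, b i * b (i + 1) = 0)
    (hn : n = ∑ i ∈ b.support, b i * Nat.fib (i + 2)) :
    ∑ i ∈ b.support, b i ≤ ∑ i ∈ (d n).support, d n i := by
  obtain ⟨⟨hd1, hdsum⟩, hdadj⟩ := hd n
  have hzeck : zeckLen n = b.support.card := by
    rw [hn, Finset.sum_congr rfl fun i hi => by rw [eq_one_of_mem_support hb1 hi, one_mul]]
    exact zeckLen_sum_fib fun i hi => add_one_notMem_support hb2 hi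
  have hphi : phiSum (d n).support = n := by
    rw [hdsum]
    exact Finset.sum_congr rfl fun i hi => by
      rw [eq_one_of_mem_support hd1 hi, Nat.cast_one, one_mul, phi, Real.goldenRatio]
  rw [sum_support_eq_card hb1, sum_support_eq_card hd1, ← hzeck]
  exact zeckBound (fun i hi => add_one_notMem_support hdadj hi) n hphi
end

section
/- Define ℓ(0) = 0 and, for n ≥ 1, ℓ(n) = 1 + max{i ∈ ℤ : d_i(n) = 1} (the length of the left part of the canonical φ-representation of n; note the maximum is a nonnegative integer for n ≥ 1). Then for every n ≥ 1, ℓ(n) − ℓ(n−1) ∈ {0, 1}; in particular ℓ is nondecreasing. -/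
section PowerBounds

variable {x : ℝ}

theorem zpow_add_zpow_sub_one_le (hx : 0 < x) (hx2 : x + 1 ≤ x ^ 2) (k : ℤ) :
    x ^ k + x ^ (k - 1) ≤ x ^ (k + 1) :=
  calc x ^ k + x ^ (k - 1) = x ^ (k - 1) * (x + 1) := by
        rw [mul_add, mul_one, ← zpow_add_one₀ hx.ne', sub_add_cancel]
    _ ≤ x ^ (k - 1) * x ^ 2 := by gcongr
    _ = x ^ (k + 1) := by rw [← zpow_natCast, ← zpow_add₀ hx.ne']; ring_nf

theorem sum_zpow_lt_of_forall_add_one_notMem (hx : 1 ≤ x) (hx2 : x + 1 ≤ x ^ 2) (s : Finset ℤ)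
    (hs : ∀ j ∈ s, j + 1 ∉ s) {i : ℤ} (hi : ∀ j ∈ s, j ≤ i) :
    ∑ j ∈ s, x ^ j < x ^ (i + 1) := by
  induction s using Finset.induction_on_max generalizing i with
  | empty => simpa using zpow_pos (by linarith) _
  | insert a s hlt ih =>
    have has : a ∉ s := fun h => lt_irrefl a (hlt a h)
    have hpred : a - 1 ∉ s := fun h => hs (a - 1) (by simp [h]) (by simp)
    have hs' : ∀ j ∈ s, j + 1 ∉ s := fun j hj hj1 =>
      hs j (Finset.mem_insert_of_mem hj) (Finset.mem_insert_of_mem hj1)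
    have hbelow : ∀ j ∈ s, j ≤ a - 2 := fun j hj => by
      have hja := hlt j hj
      have hj1 : j ≠ a - 1 := by rintro rfl; exact hpred hj
      omega
    have hsum := ih hs' hbelow
    rw [show a - 2 + 1 = a - 1 by ring] at hsum
    calc ∑ j ∈ insert a s, x ^ j = x ^ a + ∑ j ∈ s, x ^ j := Finset.sum_insert has
      _ < x ^ a + x ^ (a - 1) := by gcongr
      _ ≤ x ^ (a + 1) := zpow_add_zpow_sub_one_le (by linarith) hx2 a
      _ ≤ x ^ (i + 1) := zpow_le_zpow_right₀ hx (by simpa using hi a (by simp))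

theorem eq_one_of_zpow_sub_one_le_one_lt_zpow (hx : 1 < x) {k : ℤ} (hlo : x ^ (k - 1) ≤ 1)
    (hhi : 1 < x ^ k) : k = 1 := by
  rw [← zpow_zero x] at hlo hhi
  have := (zpow_le_zpow_iff_right₀ hx).mp hlo
  have := (zpow_lt_zpow_iff_right₀ hx).mp hhi
  omega

theorem eq_or_eq_add_one_of_zpow_brackets (hx : 1 < x) (hx2 : x + 1 ≤ x ^ 2) {y : ℝ} (hy : 1 ≤ y)
    {k k' : ℤ} (hlo : x ^ (k - 1) ≤ y) (hhi : y < x ^ k) (hlo' : x ^ (k' - 1) ≤ y + 1)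
    (hhi' : y + 1 < x ^ k') : k' = k ∨ k' = k + 1 := by
  have hk : 0 < k := by
    have h0k : x ^ (0 : ℤ) < x ^ k := by rw [zpow_zero]; linarith
    exact (zpow_lt_zpow_iff_right₀ hx).mp h0k
  have hone : 1 ≤ x ^ (k - 1) := one_le_zpow₀ hx.le (by omega)
  have hnext := zpow_add_zpow_sub_one_le (by linarith) hx2 k
  have hlt : x ^ (k - 1) < x ^ k' := by linarith
  have hlt' : x ^ (k' - 1) < x ^ (k + 1) := by linarith
  have := (zpow_lt_zpow_iff_right₀ hx).mp hlt
  have := (zpow_lt_zpow_iff_right₀ hx).mp hlt'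
  omega

end PowerBounds

section Representations

variable {x : ℝ} {a : ℤ →₀ ℕ}

theorem one_lt_phi : 1 < phi := Real.one_lt_goldenRatio

theorem phi_add_one_le_sq : phi + 1 ≤ phi ^ 2 := Real.goldenRatio_sq.ge

theorem IsPhiRep.eq_one_of_mem_support {j : ℤ} (h : IsPhiRep x a) (hj : j ∈ a.support) :
    a j = 1 :=
  le_antisymm (h.1 j) (Nat.one_le_iff_ne_zero.mpr (Finsupp.mem_support_iff.mp hj))

theorem IsPhiRep.eq_sum_support_s6 (h : IsPhiRep x a) : x = ∑ j ∈ a.support, phi ^ j := by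
  refine h.2.trans (Finset.sum_congr rfl fun j hj => ?_)
  rw [h.eq_one_of_mem_support hj, Nat.cast_one, one_mul]

theorem IsPhiRep.zpow_le {i : ℤ} (h : IsPhiRep x a) (hi : a i = 1) : phi ^ i ≤ x := by
  rw [h.eq_sum_support_s6]
  exact Finset.single_le_sum (fun j _ => (zpow_pos (one_pos.trans one_lt_phi) j).le)
    (Finsupp.mem_support_iff.mpr (by omega))

theorem IsCanonRep.lt_zpow_add_one {i : ℤ} (h : IsCanonRep x a) (hi : ∀ j, a j = 1 → j ≤ i) :
    x < phi ^ (i + 1) := by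
  have hone : ∀ j ∈ a.support, a j = 1 := fun _ => h.1.eq_one_of_mem_support
  rw [h.1.eq_sum_support_s6]
  refine sum_zpow_lt_of_forall_add_one_notMem one_lt_phi.le phi_add_one_le_sq _
    (fun j hj hj1 => ?_) (fun j hj => hi j (hone j hj))
  have := h.2 j
  rw [hone j hj, hone _ hj1] at this
  omega

end Representations

/-- Let `ℓ(0) = 0` and, for `n ≥ 1`, `ℓ(n) = 1 + max{i : d_i(n) = 1}` (the length of
the left part of the canonical φ-representation of `n`). Then for every `n ≥ 1`,
`ℓ(n) - ℓ(n-1) ∈ {0, 1}`; in particular `ℓ` is nondecreasing. Here `d n` denotes the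
canonical φ-representation of `n`, and `ℓ` is characterized by the hypotheses. -/
theorem length_diff_mem
    (d : ℕ → ℤ →₀ ℕ) (hd : ∀ n : ℕ, IsCanonRep n (d n))
    (ℓ : ℕ → ℕ) (hℓ0 : ℓ 0 = 0)
    (hℓ : ∀ n : ℕ, 1 ≤ n → ∃ i : ℤ, d n i = 1 ∧ (∀ j : ℤ, d n j = 1 → j ≤ i) ∧
        (ℓ n : ℤ) = i + 1) :
    (∀ n : ℕ, 1 ≤ n → ℓ n = ℓ (n - 1) ∨ ℓ n = ℓ (n - 1) + 1) ∧ Monotone ℓ := by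
  have hbracket : ∀ n, 1 ≤ n → phi ^ ((ℓ n : ℤ) - 1) ≤ n ∧ (n : ℝ) < phi ^ (ℓ n : ℤ) := by
    intro n hn
    obtain ⟨i, hi, himax, hℓi⟩ := hℓ n hn
    rw [hℓi, add_sub_cancel_right]
    exact ⟨(hd n).1.zpow_le hi, (hd n).lt_zpow_add_one himax⟩
  have hstep : ∀ n, ℓ (n + 1) = ℓ n ∨ ℓ (n + 1) = ℓ n + 1 := by
    rintro (_ | m)
    · obtain ⟨hlo, hhi⟩ := hbracket 1 le_rfl
      rw [Nat.cast_one] at hlo hhi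
      have := eq_one_of_zpow_sub_one_le_one_lt_zpow one_lt_phi hlo hhi
      rw [zero_add, hℓ0]
      omega
    · obtain ⟨hlo, hhi⟩ := hbracket (m + 1) (by omega)
      obtain ⟨hlo', hhi'⟩ := hbracket (m + 1 + 1) (by omega)
      rw [Nat.cast_succ (m + 1)] at hlo' hhi'
      have := eq_or_eq_add_one_of_zpow_brackets one_lt_phi phi_add_one_le_sq
        (by simp) hlo hhi hlo' hhi'
      omega
  refine ⟨fun n hn => ?_, monotone_nat_of_le_succ fun n => by rcases hstep n with h | h <;> omega⟩
  obtain ⟨m, rfl⟩ := Nat.exists_eq_add_of_le' hn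
  simpa using hstep m
end

section
/- Let α = (5−√5)/10 and let w(n) = ⌊(n+1)α⌋ − ⌊nα⌋ for n ∈ ℕ. Then for every n ≥ 1, d_0(n+1) = w(n), where d_0(n+1) is the digit of φ^0 in the canonical φ-representation of n+1. -/
/-- α = (5 - √5)/10. -/
noncomputable def alpha : ℝ := (5 - Real.sqrt 5) / 10

/-- The Sturmian word based on α: `w(n) = ⌊(n+1)α⌋ - ⌊nα⌋`. -/
noncomputable def sturmianW (n : ℕ) : ℤ :=
  ⌊((n : ℝ) + 1) * alpha⌋ - ⌊(n : ℝ) * alpha⌋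

/-!
Split the canonical representation of `N` as `N = V + U` with `V = Σ_{i ≥ 0} d_i φ^i` and
`U = Σ_{i < 0} d_i φ^i ∈ [0, 1)`. Then `V = p + qφ` with `p, q ∈ ℤ`, and its Galois conjugate
`y = p + qψ = Σ_{i ≥ 0} d_i ψ^i` lies in `(-1, φ⁻¹)` if `d_0 = 0` and in `(φ⁻¹, φ)` if `d_0 = 1`,
while `U - y = N - 2p - q` is an integer. As `α = 1/(φ + 2)`, we get `Nα = p + (U - φ²y)α`, and
these constraints put the fractional part of `Nα` in `(0, α)` exactly when `d_0 = 1`; the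
irrationality of `α` excludes the endpoints as soon as `N ≥ 2`.
-/

open Finset Real goldenRatio

noncomputable def digitSum (a : ℕ → ℕ) (x : ℝ) (n : ℕ) : ℝ :=
  ∑ i ∈ range n, (a i : ℝ) * x ^ i

lemma digitSum_zero (a : ℕ → ℕ) (x : ℝ) : digitSum a x 0 = 0 := by
  simp [digitSum]

lemma digitSum_succ (a : ℕ → ℕ) (x : ℝ) (n : ℕ) :
    digitSum a x (n + 1) = a 0 + x * digitSum (fun i ↦ a (i + 1)) x n := by
  simp only [digitSum, sum_range_succ', mul_sum, pow_succ, pow_zero, mul_one]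
  rw [add_comm]
  congr 1
  exact sum_congr rfl fun i _ ↦ by ring

lemma digitSum_nonneg (a : ℕ → ℕ) {x : ℝ} (hx : 0 ≤ x) (n : ℕ) : 0 ≤ digitSum a x n :=
  sum_nonneg fun i _ ↦ by positivity

lemma exists_digitSum_eq_of_sq_eq_add_one (a : ℕ → ℕ) (n : ℕ) :
    ∃ p q : ℤ, ∀ x : ℝ, x ^ 2 = x + 1 → digitSum a x n = p + q * x := by
  induction n generalizing a with
  | zero => exact ⟨0, 0, fun x _ ↦ by simp [digitSum_zero]⟩
  | succ n ih =>
    obtain ⟨p, q, h⟩ := ih fun i ↦ a (i + 1)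
    refine ⟨a 0 + q, p + q, fun x hx ↦ ?_⟩
    rw [digitSum_succ, h x hx]
    push_cast
    linear_combination q * hx

lemma Finsupp.sum_support_mul_zpow_eq_digitSum (a : ℤ →₀ ℕ) (x : ℝ) {n : ℕ}
    (hn : ∀ i ∈ a.support, i.natAbs < n) :
    ∑ i ∈ a.support, (a i : ℝ) * x ^ i =
      digitSum (fun i ↦ a i) x n + x⁻¹ * digitSum (fun j ↦ a (-(j + 1))) x⁻¹ n := by
  set f : ℤ → ℝ := fun i ↦ (a i : ℝ) * x ^ i
  have hvanish : ∀ i : ℤ, n ≤ i.natAbs → f i = 0 := fun i hi ↦ by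
    have : a i = 0 := Finsupp.notMem_support_iff.1 fun hmem ↦ (hn i hmem).not_ge hi
    simp [f, this]
  have hZ : HasSum f (∑ i ∈ a.support, f i) :=
    hasSum_sum_of_ne_finset_zero fun i hi ↦ by simp [f, Finsupp.notMem_support_iff.1 hi]
  have hN : HasSum (fun j : ℕ ↦ f j + f (-(j + 1))) (∑ j ∈ range n, (f j + f (-(j + 1)))) :=
    hasSum_sum_of_ne_finset_zero fun j hj ↦ by
      rw [mem_range, not_lt] at hj
      rw [hvanish _ (by simpa using hj), hvanish _ (by omega), add_zero]
  rw [hZ.nat_add_neg_add_one.unique hN, sum_add_distrib, digitSum, digitSum, Finset.mul_sum]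
  congr 1
  refine Finset.sum_congr rfl fun j _ ↦ ?_
  rw [show -((j : ℤ) + 1) = -((j + 1 : ℕ) : ℤ) by push_cast; ring]
  simp only [f]
  rw [zpow_neg, zpow_natCast, ← inv_pow, pow_succ]
  ring

lemma inv_goldenRatio_eq_sub_one : φ⁻¹ = φ - 1 := by
  rw [inv_goldenRatio]; linarith [goldenRatio_add_goldenConj]

lemma inv_goldenRatio_mul_self : φ⁻¹ * φ⁻¹ = 1 - φ⁻¹ := by
  rw [inv_goldenRatio]; linear_combination goldenConj_sq

section Digits

variable {a : ℕ → ℕ}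

lemma digitSum_inv_goldenRatio_lt (h01 : ∀ i, a i ≤ 1) (hadj : ∀ i, a i * a (i + 1) = 0)
    (n : ℕ) : digitSum a φ⁻¹ n < 1 + a 0 * φ⁻¹ := by
  induction n generalizing a with
  | zero => rw [digitSum_zero]; positivity
  | succ n ih =>
    have hs := ih (fun i ↦ h01 (i + 1)) (fun i ↦ hadj (i + 1))
    rw [digitSum_succ]
    generalize digitSum (fun i ↦ a (i + 1)) φ⁻¹ n = s at hs ⊢
    have hr := inv_pos.2 goldenRatio_pos
    have hrr := inv_goldenRatio_mul_self
    rcases Nat.le_one_iff_eq_zero_or_eq_one.1 (h01 0) with h0 | h0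
    · have h1 : (a 1 : ℝ) ≤ 1 := by exact_mod_cast h01 1
      rw [h0, Nat.cast_zero]
      nlinarith [mul_lt_mul_of_pos_left hs hr]
    · have h1 : a 1 = 0 := by simpa [h0] using hadj 0
      simp only [zero_add, h1, h0, Nat.cast_zero, Nat.cast_one] at hs ⊢
      nlinarith [mul_lt_mul_of_pos_left hs hr]

lemma digitSum_goldenConj_mem_Ioo (h01 : ∀ i, a i ≤ 1) (hadj : ∀ i, a i * a (i + 1) = 0)
    {n : ℕ} (hn : ∀ i, n ≤ i → a i = 0) :
    digitSum a ψ n ∈ Set.Ioo (a 0 * φ - 1) (a 0 + φ⁻¹) := by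
  induction n generalizing a with
  | zero =>
    rw [hn 0 le_rfl, digitSum_zero, Nat.cast_zero, zero_mul, zero_sub, zero_add]
    exact ⟨neg_one_lt_zero, inv_pos.2 goldenRatio_pos⟩
  | succ n ih =>
    obtain ⟨hlo, hhi⟩ := ih (fun i ↦ h01 (i + 1)) (fun i ↦ hadj (i + 1))
      (fun i hi ↦ hn (i + 1) (by omega))
    rw [digitSum_succ]
    generalize digitSum (fun i ↦ a (i + 1)) ψ n = s at hlo hhi ⊢
    have hr := inv_pos.2 goldenRatio_pos
    have hrr := inv_goldenRatio_mul_self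
    have hφ : φ = 1 + φ⁻¹ := by rw [inv_goldenRatio_eq_sub_one]; ring
    rw [← neg_neg ψ, ← inv_goldenRatio]
    generalize φ⁻¹ = r at *
    rw [hφ] at hlo ⊢
    rcases Nat.le_one_iff_eq_zero_or_eq_one.1 (h01 0) with h0 | h0
    · have h1 : (a 1 : ℝ) ≤ 1 := by exact_mod_cast h01 1
      simp only [zero_add, h0, Nat.cast_zero] at hlo hhi ⊢
      constructor <;> nlinarith [mul_lt_mul_of_pos_left hlo hr, mul_lt_mul_of_pos_left hhi hr]
    · have h1 : a 1 = 0 := by simpa [h0] using hadj 0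
      simp only [zero_add, h1, h0, Nat.cast_zero, Nat.cast_one] at hlo hhi ⊢
      constructor <;> nlinarith [mul_lt_mul_of_pos_left hlo hr, mul_lt_mul_of_pos_left hhi hr]

end Digits

lemma alpha_mul_goldenRatio_add_two : alpha * (φ + 2) = 1 := by
  have h5 : √5 ^ 2 = 5 := Real.sq_sqrt (by norm_num)
  rw [alpha, goldenRatio]
  linear_combination -h5 / 20

lemma alpha_pos : 0 < alpha := by
  nlinarith [alpha_mul_goldenRatio_add_two, goldenRatio_pos]

lemma two_mul_alpha_lt_one : 2 * alpha < 1 := by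
  nlinarith [alpha_mul_goldenRatio_add_two, one_lt_goldenRatio, alpha_pos]

lemma irrational_alpha : Irrational alpha := by
  rw [eq_inv_of_mul_eq_one_left alpha_mul_goldenRatio_add_two]
  simpa using (goldenRatio_irrational.add_natCast 2).inv

lemma natCast_mul_alpha_ne_int {N : ℕ} (hN : N ≠ 0) (m : ℤ) : (N : ℝ) * alpha ≠ m :=
  (irrational_alpha.natCast_mul hN).ne_int m

lemma floor_sub_floor_sub_alpha_eq_one {t U y : ℝ} {p k : ℤ} (hU : 0 ≤ U) (hUφ : U < φ⁻¹)
    (hy : φ⁻¹ < y) (hyφ : y < φ) (hk : U - y = k) (ht : t = p + (U - φ ^ 2 * y) * alpha)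
    (ht' : ∀ m : ℤ, t - alpha ≠ m) : ⌊t⌋ - ⌊t - alpha⌋ = 1 := by
  have hk1 : k = -1 := by
    have hk0 : k < 0 := by exact_mod_cast (show (k : ℝ) < 0 by linarith)
    have hk2 : -2 < k := by
      exact_mod_cast (show (-2 : ℝ) < k by linarith [goldenRatio_lt_two])
    omega
  rw [hk1, Int.cast_neg, Int.cast_one] at hk
  have hφU : φ * U < 1 := by
    calc φ * U < φ * φ⁻¹ := mul_lt_mul_of_pos_left hUφ goldenRatio_pos
      _ = 1 := mul_inv_cancel₀ goldenRatio_ne_zero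
  have hα := alpha_pos
  have hα2 := two_mul_alpha_lt_one
  have hw0 : 0 ≤ φ * U * alpha := by have := goldenRatio_pos; positivity
  have hw1 : φ * U * alpha < alpha := by nlinarith
  have ht2 : t = p - 1 + alpha - φ * U * alpha := by
    linear_combination ht - alpha_mul_goldenRatio_add_two + (φ + 1) * alpha * hk
      - y * alpha * goldenRatio_sq
  have hlt : t - alpha < p - 1 :=
    lt_of_le_of_ne (by linarith) (by exact_mod_cast ht' (p - 1))
  rw [show (1 : ℤ) = (p - 1) - (p - 2) by ring]
  congr 1
  · rw [Int.floor_eq_iff]; push_cast; constructor <;> linarith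
  · rw [Int.floor_eq_iff]; push_cast; constructor <;> linarith

lemma floor_sub_floor_sub_alpha_eq_zero {t U y : ℝ} {p k : ℤ} (hU : 0 ≤ U) (hU1 : U < 1)
    (hy : -1 < y) (hyφ : y < φ⁻¹) (hk : U - y = k) (ht : t = p + (U - φ ^ 2 * y) * alpha)
    (ht' : ∀ m : ℤ, t ≠ m) : ⌊t⌋ - ⌊t - alpha⌋ = 0 := by
  have hk01 : k = 0 ∨ k = 1 := by
    have hk0 : -1 < k := by
      have := inv_goldenRatio_eq_sub_one
      exact_mod_cast (show (-1 : ℝ) < k by linarith [goldenRatio_lt_two])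
    have hk2 : k < 2 := by exact_mod_cast (show (k : ℝ) < 2 by linarith)
    omega
  have hα := alpha_pos
  have hα2 := two_mul_alpha_lt_one
  have hφ := goldenRatio_pos
  rcases hk01 with rfl | rfl
  · rw [Int.cast_zero] at hk
    have hφU : φ * U < 1 := by
      calc φ * U < φ * φ⁻¹ := mul_lt_mul_of_pos_left (by linarith) goldenRatio_pos
        _ = 1 := mul_inv_cancel₀ goldenRatio_ne_zero
    have hw0 : 0 ≤ φ * U * alpha := by positivity
    have hw1 : φ * U * alpha < alpha := by nlinarith
    have ht2 : t = p - φ * U * alpha := by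
      linear_combination ht + (φ + 1) * alpha * hk - y * alpha * goldenRatio_sq
    have hlt : t < p := lt_of_le_of_ne (by linarith) (ht' p)
    rw [show (0 : ℤ) = (p - 1) - (p - 1) by ring]
    congr 1
    · rw [Int.floor_eq_iff]; push_cast; constructor <;> linarith
    · rw [Int.floor_eq_iff]; push_cast; constructor <;> linarith
  · rw [Int.cast_one] at hk
    have hw0 : 0 ≤ φ * U * alpha := by positivity
    have hw1 : φ * U * alpha < φ * alpha := by
      nlinarith [mul_lt_mul_of_pos_left hU1 (mul_pos hφ hα)]
    have hφα : φ * alpha = 1 - 2 * alpha := by linear_combination alpha_mul_goldenRatio_add_two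
    have ht2 : t = p + 1 - alpha - φ * U * alpha := by
      linear_combination ht + alpha_mul_goldenRatio_add_two + (φ + 1) * alpha * hk
        - y * alpha * goldenRatio_sq
    rw [show (0 : ℤ) = p - p by ring]
    congr 1
    · rw [Int.floor_eq_iff]; constructor <;> linarith
    · rw [Int.floor_eq_iff]; constructor <;> linarith

lemma floor_sub_floor_sub_alpha_eq_of_eq_digitSum {N n : ℕ} {b c : ℕ → ℕ} (hN : 2 ≤ N)
    (hb01 : ∀ i, b i ≤ 1) (hbadj : ∀ i, b i * b (i + 1) = 0) (hbn : ∀ i, n ≤ i → b i = 0)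
    (hc01 : ∀ i, c i ≤ 1) (hcadj : ∀ i, c i * c (i + 1) = 0) (hbc : b 0 * c 0 = 0)
    (hsplit : (N : ℝ) = digitSum b φ n + φ⁻¹ * digitSum c φ⁻¹ n) :
    ⌊(N : ℝ) * alpha⌋ - ⌊(N : ℝ) * alpha - alpha⌋ = b 0 := by
  have hr := inv_pos.2 goldenRatio_pos
  have hU0 : 0 ≤ φ⁻¹ * digitSum c φ⁻¹ n := mul_nonneg hr.le (digitSum_nonneg _ hr.le _)
  have hU1 := mul_lt_mul_of_pos_left (digitSum_inv_goldenRatio_lt hc01 hcadj n) hr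
  obtain ⟨hylo, hyhi⟩ := digitSum_goldenConj_mem_Ioo hb01 hbadj hbn
  obtain ⟨p, q, hpq⟩ := exists_digitSum_eq_of_sq_eq_add_one b n
  have hV := hpq φ goldenRatio_sq
  have hy := hpq ψ goldenConj_sq
  generalize φ⁻¹ * digitSum c φ⁻¹ n = U at hsplit hU0 hU1
  generalize digitSum b ψ n = y at hy hylo hyhi
  have hk : U - y = ((N - 2 * p - q : ℤ) : ℝ) := by
    push_cast
    linear_combination -hsplit - hV - hy - q * goldenRatio_add_goldenConj
  have ht : (N : ℝ) * alpha = p + (U - φ ^ 2 * y) * alpha := by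
    linear_combination alpha * hsplit + alpha * hV + φ ^ 2 * alpha * hy
      + p * alpha_mul_goldenRatio_add_two + p * alpha * goldenRatio_sq
      + q * alpha * φ * goldenRatio_mul_goldenConj
  have hφ := inv_goldenRatio_eq_sub_one
  rcases Nat.le_one_iff_eq_zero_or_eq_one.1 (hb01 0) with h0 | h0
  · rw [h0, Nat.cast_zero] at hylo hyhi ⊢
    have hc0 : (c 0 : ℝ) ≤ 1 := by exact_mod_cast hc01 0
    refine floor_sub_floor_sub_alpha_eq_zero hU0 ?_ (by linarith) (by linarith) hk ht
      (natCast_mul_alpha_ne_int (by omega))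
    nlinarith [inv_goldenRatio_mul_self]
  · rw [h0, one_mul] at hbc
    rw [hbc, Nat.cast_zero] at hU1
    rw [h0, Nat.cast_one] at hylo hyhi ⊢
    refine floor_sub_floor_sub_alpha_eq_one hU0 (by linarith) (by linarith) (by linarith) hk ht
      fun m ↦ ?_
    have := natCast_mul_alpha_ne_int (N := N - 1) (by omega) m
    rwa [Nat.cast_sub (by omega), Nat.cast_one, sub_one_mul] at this

lemma IsCanonRep.floor_sub_floor_sub_alpha_eq {N : ℕ} {a : ℤ →₀ ℕ} (ha : IsCanonRep N a)
    (hN : 2 ≤ N) : ⌊(N : ℝ) * alpha⌋ - ⌊(N : ℝ) * alpha - alpha⌋ = a 0 := by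
  obtain ⟨⟨h01, hsum⟩, hadj⟩ := ha
  obtain ⟨n, hn⟩ : ∃ n : ℕ, ∀ i ∈ a.support, i.natAbs < n :=
    ⟨a.support.sup Int.natAbs + 1, fun i hi ↦ Nat.lt_succ_of_le (Finset.le_sup hi)⟩
  refine floor_sub_floor_sub_alpha_eq_of_eq_digitSum (n := n) (c := fun j ↦ a (-(j + 1))) hN
    (fun i ↦ h01 i) (fun i ↦ by simpa using hadj i)
    (fun i hi ↦ Finsupp.notMem_support_iff.1 fun hmem ↦ (hn _ hmem).not_ge (by simpa using hi))
    (fun j ↦ h01 _) (fun j ↦ ?_) (by simpa [mul_comm] using hadj (-1)) ?_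
  · rw [mul_comm]
    convert hadj (-(j + 2)) using 3 <;> push_cast <;> ring
  · rw [hsum, ← a.sum_support_mul_zpow_eq_digitSum φ hn]
    refine Finset.sum_congr rfl fun i hi ↦ ?_
    rw [(Nat.le_one_iff_eq_zero_or_eq_one.1 (h01 i)).resolve_left (Finsupp.mem_support_iff.1 hi)]
    simp [phi]

/-- For `n ≥ 1`, the digit of φ⁰ in the canonical φ-representation of `n+1` equals
`w(n)`. Here `d n` denotes the canonical φ-representation of `n`. -/
theorem d0_eq_sturmian
    (d : ℕ → ℤ →₀ ℕ) (hd : ∀ n : ℕ, IsCanonRep n (d n))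
    (n : ℕ) (hn : 1 ≤ n) :
    (d (n + 1) 0 : ℤ) = sturmianW n := by
  rw [sturmianW, ← (hd (n + 1)).floor_sub_floor_sub_alpha_eq (by omega)]
  push_cast
  ring_nf
end
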